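/- arXiv:2208.05467 — 5 statements merged into one kernel-verified Lean document; each statement's English description precedes it below -/
import Mathlib

section
/- Let P ⊆ ℝⁿ and Q ⊆ ℝᵐ be pointed polyhedra and let π : ℝᵐ → ℝⁿ be a linear map with π(Q) = P. Then for every edge direction g of P there exists an edge direction f of Q such that π(f) = g. -/
/-!
Write the edge `F` of `P` as the set of maximizers of `c` on `P` and pull `c` back to a
functional `c'` with `c' ⬝ᵥ y = c ⬝ᵥ π y`. Among the faces of `Q` cut out by `c' ⬝ᵥ y = s`
together with a set `T` of tight inequalities, take one on which `π` is not constant with `T`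
maximal. Its direction space maps into the line `ℝ ∙ g`; if it had dimension at least two, some
nonzero direction `w` would be killed by `π`. As `Q` is pointed, moving along `w` (or `-w`)
increases some inequality, so sliding the points of a non-constant segment of the face along `w`
until an inequality becomes tight gives, by pigeonhole, a larger `T` on which `π` is still not
constant. Hence that face is an edge of `Q`, and a multiple of one of its directions maps to `g`.
-/

open Matrix

noncomputable section

/-- The polyhedron `{x : Ax = b, Bx ≤ d}`. -/
def polySet {p q n : Type*} [Fintype n] (A : Matrix p n ℝ) (b : p → ℝ)
    (B : Matrix q n ℝ) (d : q → ℝ) : Set (n → ℝ) :=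
  {x | A.mulVec x = b ∧ B.mulVec x ≤ d}

/-- The circuits of the linear description `Ax = b, Bx ≤ d`: nonzero kernel elements `g` of `A`
whose support of `Bg` is inclusion-minimal among nonzero kernel elements. -/
def circuits {p q n : Type*} [Fintype n] (A : Matrix p n ℝ) (B : Matrix q n ℝ) :
    Set (n → ℝ) :=
  {g | A.mulVec g = 0 ∧ g ≠ 0 ∧
    ∀ y : n → ℝ, A.mulVec y = 0 → y ≠ 0 →
      {i | B.mulVec y i ≠ 0} ⊆ {i | B.mulVec g i ≠ 0} →
      {i | B.mulVec g i ≠ 0} ⊆ {i | B.mulVec y i ≠ 0}}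

/-- A face of a polyhedron `P`: either `P` itself or the set of maximizers of a linear
functional over `P` whose supremum is finite and attained. -/
def IsFace {n : Type*} [Fintype n] (P F : Set (n → ℝ)) : Prop :=
  F = P ∨ ∃ (c : n → ℝ) (s : ℝ),
    (∀ y ∈ P, c ⬝ᵥ y ≤ s) ∧ (∃ y ∈ P, c ⬝ᵥ y = s) ∧ F = {x ∈ P | c ⬝ᵥ x = s}

/-- The dimension of the affine span of a set. -/
def spanDim {n : Type*} [Fintype n] (S : Set (n → ℝ)) : ℕ :=
  Module.finrank ℝ (affineSpan ℝ S).direction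

def IsVertex {n : Type*} [Fintype n] (P : Set (n → ℝ)) (v : n → ℝ) : Prop :=
  IsFace P {v}

def IsEdge {n : Type*} [Fintype n] (P F : Set (n → ℝ)) : Prop :=
  IsFace P F ∧ spanDim F = 1

/-- A nonzero vector lying in the direction space of the affine span of some edge of `P`. -/
def IsEdgeDirection {n : Type*} [Fintype n] (P : Set (n → ℝ)) (g : n → ℝ) : Prop :=
  g ≠ 0 ∧ ∃ F, IsEdge P F ∧ g ∈ (affineSpan ℝ F).direction

/-- A facet: a face whose affine span has dimension `dim P - 1`. -/
def IsFacet {n : Type*} [Fintype n] (P F : Set (n → ℝ)) : Prop :=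
  IsFace P F ∧ spanDim F + 1 = spanDim P

/-- A pointed set: contains no affine line. -/
def PointedSet {n : Type*} [Fintype n] (P : Set (n → ℝ)) : Prop :=
  ∀ x v : n → ℝ, (∀ t : ℝ, x + t • v ∈ P) → v = 0

/-- `Ax = b, Bx ≤ d` is an irredundant description of `P`. -/
def Irredundant {p q n : Type*} [Fintype n] (A : Matrix p n ℝ) (b : p → ℝ)
    (B : Matrix q n ℝ) (d : q → ℝ) (P : Set (n → ℝ)) : Prop :=
  P = polySet A b B d ∧
  {x | A.mulVec x = b} = (affineSpan ℝ P : Set (n → ℝ)) ∧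
  ∀ i, IsFacet P {x ∈ P | B.mulVec x i = d i}

/-- A basic solution of the system `Ax = b, Bx ≤ d`: satisfies the equalities, and the rows of
`A` together with the tight rows of `B` span the whole space. -/
def IsBasicSolution {p q n : Type*} [Fintype n] (A : Matrix p n ℝ) (b : p → ℝ)
    (B : Matrix q n ℝ) (d : q → ℝ) (g : n → ℝ) : Prop :=
  A.mulVec g = b ∧
  Submodule.span ℝ (Set.range (fun i => A i) ∪
    (fun i => B i) '' {i | B.mulVec g i = d i}) = ⊤

theorem LinearMap.map_eq_zero_of_mem_vectorSpan {k V W : Type*} [Ring k] [AddCommGroup V]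
    [Module k V] [AddCommGroup W] [Module k W] (f : V →ₗ[k] W) {S : Set V}
    (hS : ∀ x ∈ S, ∀ y ∈ S, f x = f y) {v : V} (hv : v ∈ vectorSpan k S) : f v = 0 := by
  have : vectorSpan k S ≤ LinearMap.ker f := by
    rw [vectorSpan_def, Submodule.span_le]
    rintro _ ⟨x, hx, y, hy, rfl⟩
    simp [hS x hx y hy]
  exact this hv

theorem Submodule.exists_mem_ne_zero_apply_eq_zero_of_finrank_map_lt {K V W : Type*}
    [DivisionRing K] [AddCommGroup V] [Module K V] [FiniteDimensional K V] [AddCommGroup W]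
    [Module K W] (f : V →ₗ[K] W) {D : Submodule K V}
    (h : Module.finrank K (D.map f) < Module.finrank K D) : ∃ v ∈ D, v ≠ 0 ∧ f v = 0 := by
  by_contra! hinj
  have hf : Function.Injective (f.domRestrict D) := by
    rw [injective_iff_map_eq_zero]
    rintro ⟨v, hv⟩ hfv
    by_contra hv0
    exact hinj v hv (by simpa using hv0) hfv
  have := LinearMap.finrank_range_of_inj hf
  rw [LinearMap.range_domRestrict] at this
  omega

theorem nontrivial_of_finrank_vectorSpan_pos {k V : Type*} [DivisionRing k] [AddCommGroup V]
    [Module k V] {S : Set V} (h : 0 < Module.finrank k (vectorSpan k S)) : S.Nontrivial := by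
  rw [← Set.not_subsingleton_iff, ← vectorSpan_eq_bot_iff_subsingleton (k := k)]
  intro hS
  rw [hS, finrank_bot] at h
  exact h.false

theorem exists_dotProduct_eq_dotProduct_map {m n : Type*} [Fintype m] [Fintype n]
    (π : (m → ℝ) →ₗ[ℝ] (n → ℝ)) (c : n → ℝ) : ∃ c' : m → ℝ, ∀ y, c' ⬝ᵥ y = c ⬝ᵥ π y := by
  classical
  exact ⟨c ᵥ* LinearMap.toMatrix' π, fun y => by
    rw [← dotProduct_mulVec, LinearMap.toMatrix'_mulVec]⟩

theorem IsFace.exists_eq_setOf_dotProduct_eq {n : Type*} [Fintype n] {P F : Set (n → ℝ)}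
    (h : IsFace P F) : ∃ c s, (∀ x ∈ P, c ⬝ᵥ x ≤ s) ∧ F = {x ∈ P | c ⬝ᵥ x = s} := by
  rcases h with rfl | ⟨c, s, hc, -, rfl⟩
  · exact ⟨0, 0, by simp, by simp⟩
  · exact ⟨c, s, hc, rfl⟩

theorem exists_isEdgeDirection_map_eq {m n : Type*} [Fintype m] {Q E : Set (m → ℝ)}
    (hE : IsEdge Q E) {u : m → ℝ} (hu : u ∈ vectorSpan ℝ E) {π : (m → ℝ) →ₗ[ℝ] (n → ℝ)}
    {g : n → ℝ} (hπu : π u ≠ 0) (hπug : π u ∈ ℝ ∙ g) : ∃ f, IsEdgeDirection Q f ∧ π f = g := by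
  obtain ⟨β, hβ⟩ := Submodule.mem_span_singleton.1 hπug
  have hβ0 : β ≠ 0 := by
    rintro rfl
    exact hπu (by rw [← hβ, zero_smul])
  refine ⟨β⁻¹ • u, ⟨smul_ne_zero (inv_ne_zero hβ0) fun h => hπu (by rw [h, map_zero]), E, hE,
    by rw [direction_affineSpan]; exact Submodule.smul_mem _ _ hu⟩, ?_⟩
  rw [map_smul, ← hβ, smul_smul, inv_mul_cancel₀ hβ0, one_smul]

section TightFace

variable {p q m : Type*} [Fintype m] (A : Matrix p m ℝ) (b : p → ℝ) (B : Matrix q m ℝ)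
  (d : q → ℝ)

def tightFace (c : m → ℝ) (s : ℝ) (T : Finset q) : Set (m → ℝ) :=
  {y ∈ polySet A b B d | c ⬝ᵥ y = s ∧ ∀ i ∈ T, (B *ᵥ y) i = d i}

variable {A b B d} {c : m → ℝ} {s : ℝ} {T : Finset q}

theorem tightFace_subset_tightFace_empty :
    tightFace A b B d c s T ⊆ tightFace A b B d c s ∅ :=
  fun _ ⟨hy, hyc, _⟩ => ⟨hy, hyc, by simp⟩

theorem convex_tightFace : Convex ℝ (tightFace A b B d c s T) := by
  rintro x ⟨⟨hxA, hxB⟩, hxc, hxT⟩ y ⟨⟨hyA, hyB⟩, hyc, hyT⟩ θ η hθ hη hθη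
  refine ⟨⟨?_, fun i => ?_⟩, ?_, fun i hi => ?_⟩
  · rw [mulVec_add, mulVec_smul, mulVec_smul, hxA, hyA, ← add_smul, hθη, one_smul]
  · simp only [mulVec_add, mulVec_smul, Pi.add_apply, Pi.smul_apply, smul_eq_mul]
    have hdi : d i = θ * d i + η * d i := by rw [← add_mul, hθη, one_mul]
    linarith [mul_le_mul_of_nonneg_left (hxB i) hθ, mul_le_mul_of_nonneg_left (hyB i) hη]
  · rw [dotProduct_add, dotProduct_smul, dotProduct_smul, hxc, hyc, smul_eq_mul, smul_eq_mul,
      ← add_mul, hθη, one_mul]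
  · simp only [mulVec_add, mulVec_smul, Pi.add_apply, Pi.smul_apply, smul_eq_mul, hxT i hi,
      hyT i hi, ← add_mul, hθη, one_mul]

theorem mulVec_eq_zero_of_mem_vectorSpan_tightFace {v : m → ℝ}
    (hv : v ∈ vectorSpan ℝ (tightFace A b B d c s T)) :
    A *ᵥ v = 0 ∧ c ⬝ᵥ v = 0 ∧ ∀ i ∈ T, (B *ᵥ v) i = 0 := by
  refine ⟨A.mulVecLin.map_eq_zero_of_mem_vectorSpan ?_ hv,
    (dotProductBilin ℝ ℝ c).map_eq_zero_of_mem_vectorSpan ?_ hv,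
    fun i hi => (LinearMap.proj i ∘ₗ B.mulVecLin).map_eq_zero_of_mem_vectorSpan ?_ hv⟩
  · rintro x ⟨⟨hx, -⟩, -⟩ y ⟨⟨hy, -⟩, -⟩
    simp [hx, hy]
  · rintro x ⟨-, hx, -⟩ y ⟨-, hy, -⟩
    simp [hx, hy]
  · rintro x ⟨-, -, hx⟩ y ⟨-, -, hy⟩
    simp [hx i hi, hy i hi]

theorem isFace_tightFace (hc : ∀ y ∈ polySet A b B d, c ⬝ᵥ y ≤ s)
    (hne : (tightFace A b B d c s T).Nonempty) :
    IsFace (polySet A b B d) (tightFace A b B d c s T) := by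
  -- `c + ∑ i ∈ T, B i` falls short of `s + ∑ i ∈ T, d i` by a sum of nonnegative slacks.
  have hslack : ∀ y, (c + ∑ i ∈ T, B i) ⬝ᵥ y =
      s + ∑ i ∈ T, d i - ((s - c ⬝ᵥ y) + ∑ i ∈ T, (d i - (B *ᵥ y) i)) := by
    intro y
    have hsum : (∑ i ∈ T, B i) ⬝ᵥ y = ∑ i ∈ T, (B *ᵥ y) i := sum_dotProduct T (fun i => B i) y
    rw [add_dotProduct, hsum, Finset.sum_sub_distrib]
    ring
  have hnonneg : ∀ y ∈ polySet A b B d, 0 ≤ s - c ⬝ᵥ y ∧ ∀ i ∈ T, 0 ≤ d i - (B *ᵥ y) i :=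
    fun y hy => ⟨sub_nonneg.2 (hc y hy), fun i _ => sub_nonneg.2 (hy.2 i)⟩
  refine Or.inr ⟨c + ∑ i ∈ T, B i, s + ∑ i ∈ T, d i, fun y hy => ?_, ?_, ?_⟩
  · obtain ⟨h1, h2⟩ := hnonneg y hy
    rw [hslack]
    linarith [Finset.sum_nonneg h2]
  · obtain ⟨y, hy, hyc, hyT⟩ := hne
    refine ⟨y, hy, ?_⟩
    rw [hslack, hyc, sub_self, zero_add,
      Finset.sum_eq_zero fun i hi => sub_eq_zero.2 (hyT i hi).symm, sub_zero]
  · ext y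
    refine and_congr_right fun hy => ?_
    obtain ⟨h1, h2⟩ := hnonneg y hy
    rw [hslack, sub_eq_self, add_eq_zero_iff_of_nonneg h1 (Finset.sum_nonneg h2),
      Finset.sum_eq_zero_iff_of_nonneg h2]
    simp only [sub_eq_zero, eq_comm]

theorem PointedSet.exists_mulVec_ne_zero (hQ : PointedSet (polySet A b B d)) {x : m → ℝ}
    (hx : x ∈ polySet A b B d) {v : m → ℝ} (hAv : A *ᵥ v = 0) (hv : v ≠ 0) :
    ∃ i, (B *ᵥ v) i ≠ 0 := by
  by_contra! hBv
  refine hv (hQ x v fun t => ⟨?_, ?_⟩)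
  · rw [mulVec_add, mulVec_smul, hAv, smul_zero, add_zero, hx.1]
  · rw [mulVec_add, mulVec_smul, show B *ᵥ v = 0 from funext hBv, smul_zero, add_zero]
    exact hx.2

theorem exists_add_smul_mem_polySet_mulVec_eq [Fintype q] {x w : m → ℝ}
    (hx : x ∈ polySet A b B d) (hAw : A *ᵥ w = 0) (hw : ∃ i, 0 < (B *ᵥ w) i) :
    ∃ (t : ℝ) (i : q), 0 < (B *ᵥ w) i ∧ x + t • w ∈ polySet A b B d ∧
      (B *ᵥ (x + t • w)) i = d i := by
  classical
  set S := Finset.univ.filter fun i => 0 < (B *ᵥ w) i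
  have hS : S.Nonempty := by
    obtain ⟨i, hi⟩ := hw
    exact ⟨i, by simpa [S] using hi⟩
  have hmemS : ∀ {i}, i ∈ S ↔ 0 < (B *ᵥ w) i := by simp [S]
  -- Step to the first inequality, among those that `w` increases, that becomes tight.
  set ratio := fun i => (d i - (B *ᵥ x) i) / (B *ᵥ w) i
  obtain ⟨i, hiS, hti⟩ := Finset.exists_mem_eq_inf' hS ratio
  set t := S.inf' hS ratio
  have ht : 0 ≤ t := Finset.le_inf' hS ratio fun j hj =>
    div_nonneg (sub_nonneg.2 (hx.2 j)) (hmemS.1 hj).le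
  have hB : ∀ j, (B *ᵥ (x + t • w)) j = (B *ᵥ x) j + t * (B *ᵥ w) j := by
    simp [mulVec_add, mulVec_smul]
  refine ⟨t, i, hmemS.1 hiS, ⟨?_, fun j => ?_⟩, ?_⟩
  · rw [mulVec_add, mulVec_smul, hAw, smul_zero, add_zero, hx.1]
  · rw [hB]
    by_cases hj : 0 < (B *ᵥ w) j
    · have := (le_div_iff₀ hj).1 (Finset.inf'_le ratio (hmemS.2 hj))
      linarith
    · nlinarith [hx.2 j]
  · rw [hB, hti, div_mul_cancel₀ _ (hmemS.1 hiS).ne']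
    ring

theorem add_smul_mem_tightFace_insert [DecidableEq q] {x w : m → ℝ} {t : ℝ} {i : q}
    (hx : x ∈ tightFace A b B d c s T) (hcw : c ⬝ᵥ w = 0) (hTw : ∀ j ∈ T, (B *ᵥ w) j = 0)
    (hxt : x + t • w ∈ polySet A b B d) (hi : (B *ᵥ (x + t • w)) i = d i) :
    x + t • w ∈ tightFace A b B d c s (insert i T) := by
  refine ⟨hxt, ?_, fun j hj => ?_⟩
  · rw [dotProduct_add, dotProduct_smul, hcw, smul_zero, add_zero, hx.2.1]
  · rcases Finset.mem_insert.1 hj with rfl | hj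
    · exact hi
    · simp [mulVec_add, mulVec_smul, hx.2.2 j hj, hTw j hj]

variable {W : Type*} [AddCommGroup W] [Module ℝ W]

theorem exists_insert_tightFace_map_ne [Finite q] [DecidableEq q]
    (hQ : PointedSet (polySet A b B d)) (π : (m → ℝ) →ₗ[ℝ] W) {a a' : m → ℝ}
    (ha : a ∈ tightFace A b B d c s T) (ha' : a' ∈ tightFace A b B d c s T) (haa' : π a ≠ π a')
    {v : m → ℝ} (hv : v ∈ vectorSpan ℝ (tightFace A b B d c s T)) (hv0 : v ≠ 0)
    (hπv : π v = 0) :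
    ∃ i ∉ T, ∃ y ∈ tightFace A b B d c s (insert i T),
      ∃ y' ∈ tightFace A b B d c s (insert i T), π y ≠ π y' := by
  have := Fintype.ofFinite q
  obtain ⟨i₀, hi₀⟩ :=
    hQ.exists_mulVec_ne_zero ha.1 (mulVec_eq_zero_of_mem_vectorSpan_tightFace hv).1 hv0
  obtain ⟨w, hw, hπw, hwpos⟩ :
      ∃ w ∈ vectorSpan ℝ (tightFace A b B d c s T), π w = 0 ∧ ∃ i, 0 < (B *ᵥ w) i := by
    rcases hi₀.lt_or_gt with h | h
    · exact ⟨-v, neg_mem hv, by rw [map_neg, hπv, neg_zero], i₀, by simpa [mulVec_neg] using h⟩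
    · exact ⟨v, hv, hπv, i₀, h⟩
  obtain ⟨hAw, hcw, hTw⟩ := mulVec_eq_zero_of_mem_vectorSpan_tightFace hw
  -- Push every point of the segment `[a, a']` along `w` until a new inequality becomes tight;
  -- by pigeonhole, two of them reach the same one.
  have hpush : ∀ t : Set.Icc (0 : ℝ) 1, ∃ (τ : ℝ) (i : q), 0 < (B *ᵥ w) i ∧
      AffineMap.lineMap a a' (t : ℝ) + τ • w ∈ tightFace A b B d c s (insert i T) := by
    intro t
    have hz := convex_tightFace.lineMap_mem ha ha' t.2
    obtain ⟨τ, i, hi, hzτ, hτi⟩ := exists_add_smul_mem_polySet_mulVec_eq hz.1 hAw hwpos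
    exact ⟨τ, i, hi, add_smul_mem_tightFace_insert hz hcw hTw hzτ hτi⟩
  choose τ idx hidx hmem using hpush
  have : Infinite (Set.Icc (0 : ℝ) 1) := (Set.Icc_infinite zero_lt_one).to_subtype
  obtain ⟨t, t', htt', heq⟩ := Finite.exists_ne_map_eq_of_infinite idx
  have hπ : ∀ r : ℝ, π (AffineMap.lineMap a a' r) = AffineMap.lineMap (π a) (π a') r := by
    simp [AffineMap.lineMap_apply_module]
  refine ⟨idx t, fun hT => (hidx t).ne' (hTw _ hT), _, hmem t, _, heq ▸ hmem t', ?_⟩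
  rw [map_add, map_add, map_smul, map_smul, hπw, smul_zero, smul_zero, add_zero, add_zero, hπ, hπ]
  exact (AffineMap.lineMap_injective ℝ haa').ne (Subtype.coe_injective.ne htt')

theorem exists_isEdge_subset_tightFace_map_ne_zero [Finite q]
    (hQ : PointedSet (polySet A b B d)) (π : (m → ℝ) →ₗ[ℝ] W)
    (hc : ∀ y ∈ polySet A b B d, c ⬝ᵥ y ≤ s)
    (hrank : Module.finrank ℝ ((vectorSpan ℝ (tightFace A b B d c s ∅)).map π) ≤ 1)
    (hne : ∃ a ∈ tightFace A b B d c s ∅, ∃ a' ∈ tightFace A b B d c s ∅, π a ≠ π a') :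
    ∃ E ⊆ tightFace A b B d c s ∅, IsEdge (polySet A b B d) E ∧
      ∃ u ∈ vectorSpan ℝ E, π u ≠ 0 := by
  classical
  set 𝒯 : Set (Finset q) :=
    {T | ∃ a ∈ tightFace A b B d c s T, ∃ a' ∈ tightFace A b B d c s T, π a ≠ π a'}
  obtain ⟨T, ⟨a, ha, a', ha', haa'⟩, hTmax⟩ := (Set.toFinite 𝒯).exists_maximal ⟨∅, hne⟩
  set D := vectorSpan ℝ (tightFace A b B d c s T)
  have hu : a' - a ∈ D := vsub_mem_vectorSpan ℝ ha' ha
  have hπu : π (a' - a) ≠ 0 := by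
    rw [map_sub, sub_ne_zero]
    exact haa'.symm
  refine ⟨_, tightFace_subset_tightFace_empty, ⟨isFace_tightFace hc ⟨a, ha⟩, ?_⟩, _, hu, hπu⟩
  rw [spanDim, direction_affineSpan]
  refine le_antisymm ?_ (Submodule.one_le_finrank_iff.2 ?_)
  · by_contra! hD
    have hmap : Module.finrank ℝ (D.map π) < Module.finrank ℝ D :=
      ((Submodule.finrank_mono (Submodule.map_mono
        (vectorSpan_mono ℝ tightFace_subset_tightFace_empty))).trans hrank).trans_lt hD
    obtain ⟨v, hv, hv0, hπv⟩ :=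
      Submodule.exists_mem_ne_zero_apply_eq_zero_of_finrank_map_lt π hmap
    obtain ⟨i, hiT, hi⟩ := exists_insert_tightFace_map_ne hQ π ha ha' haa' hv hv0 hπv
    exact hiT (hTmax hi (Finset.subset_insert i T) (Finset.mem_insert_self i T))
  · exact fun hD => hπu (by rw [(Submodule.eq_bot_iff D).1 hD _ hu, map_zero])

theorem image_tightFace_empty {n : Type*} [Fintype n] (π : (m → ℝ) →ₗ[ℝ] (n → ℝ))
    {c' : n → ℝ} (hc : ∀ y, c ⬝ᵥ y = c' ⬝ᵥ π y) :
    π '' tightFace A b B d c s ∅ = {x ∈ π '' polySet A b B d | c' ⬝ᵥ x = s} := by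
  ext x
  constructor
  · rintro ⟨y, ⟨hy, hys, -⟩, rfl⟩
    exact ⟨⟨y, hy, rfl⟩, by rwa [← hc]⟩
  · rintro ⟨⟨y, hy, rfl⟩, hys⟩
    exact ⟨y, ⟨hy, by rwa [hc], by simp⟩, rfl⟩

end TightFace

theorem stmt_0_general {n m p₂ q₂ : ℕ}
    (A₂ : Matrix (Fin p₂) (Fin m) ℝ) (b₂ : Fin p₂ → ℝ)
    (B₂ : Matrix (Fin q₂) (Fin m) ℝ) (d₂ : Fin q₂ → ℝ)
    (P : Set (Fin n → ℝ)) (Q : Set (Fin m → ℝ))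
    (hQ : Q = polySet A₂ b₂ B₂ d₂)
    (hQpt : PointedSet Q)
    (π : (Fin m → ℝ) →ₗ[ℝ] (Fin n → ℝ)) (hπ : π '' Q = P)
    (g : Fin n → ℝ) (hg : IsEdgeDirection P g) :
    ∃ f : Fin m → ℝ, IsEdgeDirection Q f ∧ π f = g := by
  subst hQ
  obtain ⟨hg0, F, ⟨hF, hFdim⟩, hgF⟩ := hg
  rw [spanDim, direction_affineSpan] at hFdim
  rw [direction_affineSpan] at hgF
  obtain ⟨c, s, hcP, hFeq⟩ := hF.exists_eq_setOf_dotProduct_eq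
  obtain ⟨c', hc'⟩ := exists_dotProduct_eq_dotProduct_map π c
  have himage : π '' tightFace A₂ b₂ B₂ d₂ c' s ∅ = F := by
    rw [hFeq, ← hπ]
    exact image_tightFace_empty π hc'
  have hmap : (vectorSpan ℝ (tightFace A₂ b₂ B₂ d₂ c' s ∅)).map π = vectorSpan ℝ F := by
    rw [← himage]
    exact π.toAffineMap.map_vectorSpan
  obtain ⟨_, ⟨a, ha, rfl⟩, _, ⟨a', ha', rfl⟩, haa'⟩ :
      (π '' tightFace A₂ b₂ B₂ d₂ c' s ∅).Nontrivial :=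
    nontrivial_of_finrank_vectorSpan_pos (k := ℝ) (by rw [himage, hFdim]; exact one_pos)
  obtain ⟨E, hEsub, hE, u, hu, hπu⟩ := exists_isEdge_subset_tightFace_map_ne_zero hQpt π
    (fun y hy => hc' y ▸ hcP _ (hπ ▸ ⟨y, hy, rfl⟩)) (hmap ▸ hFdim.le) ⟨a, ha, a', ha', haa'⟩
  refine exists_isEdgeDirection_map_eq hE hu hπu ?_
  rw [← eq_span_singleton_of_mem_of_finrank_eq_one hFdim hgF hg0, ← hmap]
  exact Submodule.mem_map_of_mem (vectorSpan_mono ℝ hEsub hu)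

/-- If `P`, `Q` are pointed polyhedra and `π` is a linear map with `π(Q) = P`,
then every edge direction of `P` is the image of an edge direction of `Q`. -/
theorem stmt_0 {n m p₁ q₁ p₂ q₂ : ℕ}
    (A₁ : Matrix (Fin p₁) (Fin n) ℝ) (b₁ : Fin p₁ → ℝ)
    (B₁ : Matrix (Fin q₁) (Fin n) ℝ) (d₁ : Fin q₁ → ℝ)
    (A₂ : Matrix (Fin p₂) (Fin m) ℝ) (b₂ : Fin p₂ → ℝ)
    (B₂ : Matrix (Fin q₂) (Fin m) ℝ) (d₂ : Fin q₂ → ℝ)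
    (P : Set (Fin n → ℝ)) (Q : Set (Fin m → ℝ))
    (hP : P = polySet A₁ b₁ B₁ d₁) (hQ : Q = polySet A₂ b₂ B₂ d₂)
    (hPpt : PointedSet P) (hQpt : PointedSet Q)
    (π : (Fin m → ℝ) →ₗ[ℝ] (Fin n → ℝ)) (hπ : π '' Q = P)
    (g : Fin n → ℝ) (hg : IsEdgeDirection P g) :
    ∃ f : Fin m → ℝ, IsEdgeDirection Q f ∧ π f = g :=
  stmt_0_general A₂ b₂ B₂ d₂ P Q hQ hQpt π hπ g hg
end
end

section
/- Let P = {x ∈ ℝⁿ : Ax = b, Bx ≤ d} be a nonempty polyhedron with B ∈ ℝ^{m×n} and ker(A) ∩ ker(B) = {0}, and define the affine map σ : ℝⁿ → ℝᵐ by σ(x) = d − Bx. Then: (i) σ(P) = aff(σ(P)) ∩ ℝᵐ_{≥0}, where aff denotes the affine hull; and (ii) the set {Bg : g ∈ C(A,B)} equals the set of all nonzero vectors s of the subspace {By : y ∈ ker(A)} whose support supp(s) = {i : s_i ≠ 0} is inclusion-minimal among the supports of nonzero vectors of that subspace. -/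
open Matrix

noncomputable section

/-- The affine span of the image lies in `f '' S`, and every point of `f '' S` inside `C` comes
from `S ∩ f⁻¹' C`. -/
theorem AffineMap.image_inter_preimage_eq_affineSpan_inter {k V₁ P₁ V₂ P₂ : Type*} [Ring k]
    [AddCommGroup V₁] [Module k V₁] [AddTorsor V₁ P₁] [AddCommGroup V₂] [Module k V₂]
    [AddTorsor V₂ P₂] (f : P₁ →ᵃ[k] P₂) (S : AffineSubspace k P₁) (C : Set P₂) :
    f '' ((S : Set P₁) ∩ f ⁻¹' C) =
      (affineSpan k (f '' ((S : Set P₁) ∩ f ⁻¹' C)) : Set P₂) ∩ C := by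
  refine subset_antisymm (Set.subset_inter (subset_affineSpan k _) ?_) ?_
  · exact Set.image_subset_iff.2 fun _ hx => hx.2
  · rintro s ⟨hs, hC⟩
    rw [← AffineSubspace.map_span, SetLike.mem_coe, AffineSubspace.mem_map] at hs
    obtain ⟨x, hx, rfl⟩ := hs
    have hxS : x ∈ S := affineSpan_le.2 Set.inter_subset_left hx
    exact ⟨x, ⟨hxS, hC⟩, rfl⟩

section Polyhedron

variable {p q n : Type*} [Fintype n]

def slackMap (B : Matrix q n ℝ) (d : q → ℝ) : (n → ℝ) →ᵃ[ℝ] (q → ℝ) :=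
  AffineMap.const ℝ (n → ℝ) d - B.mulVecLin.toAffineMap

theorem coe_slackMap (B : Matrix q n ℝ) (d : q → ℝ) : ⇑(slackMap B d) = fun x => d - B *ᵥ x :=
  rfl

/-- The affine subspace `{x | Ax = b}`. -/
def solutionSpace (A : Matrix p n ℝ) (b : p → ℝ) : AffineSubspace ℝ (n → ℝ) :=
  (affineSpan ℝ {b}).comap A.mulVecLin.toAffineMap

theorem polySet_eq_solutionSpace_inter_preimage_slackMap (A : Matrix p n ℝ) (b : p → ℝ)
    (B : Matrix q n ℝ) (d : q → ℝ) :
    polySet A b B d = (solutionSpace A b : Set (n → ℝ)) ∩ slackMap B d ⁻¹' {s | 0 ≤ s} := by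
  ext x
  simp [polySet, solutionSpace, coe_slackMap, Pi.le_def]

theorem slackMap_image_polySet_eq_affineSpan_inter_nonneg (A : Matrix p n ℝ) (b : p → ℝ)
    (B : Matrix q n ℝ) (d : q → ℝ) :
    slackMap B d '' polySet A b B d =
      (affineSpan ℝ (slackMap B d '' polySet A b B d) : Set (q → ℝ)) ∩ {s | 0 ≤ s} := by
  rw [polySet_eq_solutionSpace_inter_preimage_slackMap]
  exact AffineMap.image_inter_preimage_eq_affineSpan_inter _ _ _

def IsSupportMinimal {ι : Type*} (V : Set (ι → ℝ)) (s : ι → ℝ) : Prop :=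
  s ∈ V ∧ s ≠ 0 ∧
    ∀ s' ∈ V, s' ≠ 0 → {i | s' i ≠ 0} ⊆ {i | s i ≠ 0} → {i | s i ≠ 0} ⊆ {i | s' i ≠ 0}

theorem mem_circuits_iff {A : Matrix p n ℝ} {B : Matrix q n ℝ}
    (hpt : ∀ v, A *ᵥ v = 0 → B *ᵥ v = 0 → v = 0) (g : n → ℝ) :
    g ∈ circuits A B ↔
      A *ᵥ g = 0 ∧ IsSupportMinimal {s | ∃ y, A *ᵥ y = 0 ∧ s = B *ᵥ y} (B *ᵥ g) := by
  have hB : ∀ y, A *ᵥ y = 0 → (B *ᵥ y = 0 ↔ y = 0) := fun y hAy =>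
    ⟨hpt y hAy, fun hy => hy ▸ mulVec_zero B⟩
  constructor
  · rintro ⟨hAg, hg0, hmin⟩
    refine ⟨hAg, ⟨g, hAg, rfl⟩, (hB g hAg).not.2 hg0, ?_⟩
    rintro _ ⟨y, hAy, rfl⟩ hy0
    exact hmin y hAy ((hB y hAy).not.1 hy0)
  · rintro ⟨hAg, -, hg0, hmin⟩
    refine ⟨hAg, (hB g hAg).not.1 hg0, fun y hAy hy0 => ?_⟩
    exact hmin _ ⟨y, hAy, rfl⟩ ((hB y hAy).not.2 hy0)

end Polyhedron

theorem stmt_3_general {p m n : ℕ}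
    (A : Matrix (Fin p) (Fin n) ℝ) (b : Fin p → ℝ)
    (B : Matrix (Fin m) (Fin n) ℝ) (d : Fin m → ℝ)
    (hpt : ∀ v : Fin n → ℝ, A.mulVec v = 0 → B.mulVec v = 0 → v = 0) :
    ((fun x => d - B.mulVec x) '' polySet A b B d =
      (affineSpan ℝ ((fun x => d - B.mulVec x) '' polySet A b B d) : Set (Fin m → ℝ)) ∩
        {s | 0 ≤ s}) ∧
    ((fun g => B.mulVec g) '' circuits A B =
      {s : Fin m → ℝ | (∃ y, A.mulVec y = 0 ∧ s = B.mulVec y) ∧ s ≠ 0 ∧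
        ∀ s' : Fin m → ℝ, (∃ y, A.mulVec y = 0 ∧ s' = B.mulVec y) → s' ≠ 0 →
          {i | s' i ≠ 0} ⊆ {i | s i ≠ 0} → {i | s i ≠ 0} ⊆ {i | s' i ≠ 0}}) := by
  refine ⟨slackMap_image_polySet_eq_affineSpan_inter_nonneg A b B d, ?_⟩
  ext s
  constructor
  · rintro ⟨g, hg, rfl⟩
    exact ((mem_circuits_iff hpt g).1 hg).2
  · intro hs
    obtain ⟨y, hAy, rfl⟩ := hs.1
    exact ⟨y, (mem_circuits_iff hpt y).2 ⟨hAy, hs⟩, rfl⟩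

/-- For a nonempty pointed polyhedron `P = {x : Ax = b, Bx ≤ d}` and the slack map
`σ(x) = d - Bx`: (i) `σ(P)` equals the intersection of its affine hull with the nonnegative
orthant; (ii) `{Bg : g ∈ C(A,B)}` is exactly the set of nonzero support-minimal vectors of the
subspace `{By : y ∈ ker A}`. -/
theorem stmt_3 {p m n : ℕ}
    (A : Matrix (Fin p) (Fin n) ℝ) (b : Fin p → ℝ)
    (B : Matrix (Fin m) (Fin n) ℝ) (d : Fin m → ℝ)
    (hne : (polySet A b B d).Nonempty)
    (hpt : ∀ v : Fin n → ℝ, A.mulVec v = 0 → B.mulVec v = 0 → v = 0) :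
    ((fun x => d - B.mulVec x) '' polySet A b B d =
      (affineSpan ℝ ((fun x => d - B.mulVec x) '' polySet A b B d) : Set (Fin m → ℝ)) ∩
        {s | 0 ≤ s}) ∧
    ((fun g => B.mulVec g) '' circuits A B =
      {s : Fin m → ℝ | (∃ y, A.mulVec y = 0 ∧ s = B.mulVec y) ∧ s ≠ 0 ∧
        ∀ s' : Fin m → ℝ, (∃ y, A.mulVec y = 0 ∧ s' = B.mulVec y) → s' ≠ 0 →
          {i | s' i ≠ 0} ⊆ {i | s i ≠ 0} → {i | s i ≠ 0} ⊆ {i | s' i ≠ 0}}) :=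
  stmt_3_general A b B d hpt
end
end

section
/- For every n ≥ 3 there exist m ∈ ℕ, pointed polyhedra P ⊂ ℝⁿ and Q ⊂ ℝᵐ, each equipped with an irredundant description, and a linear map π : ℝᵐ → ℝⁿ with π(Q) = P, such that C(P) contains at least 2^{n−1} pairwise non-parallel vectors (no one a scalar multiple of another), while every set of pairwise non-parallel vectors in C(Q) has cardinality at most 4n². -/
open Matrix

noncomputable section

/-!
`P` is the cross-polytope `{x | ∑ j, |x j| ≤ 1}`, cut out by the `2 ^ n` inequalities `c ⬝ᵥ x ≤ 1`
for the sign vectors `c ∈ {±1}ⁿ`, and `Q` is the standard simplex in `ℝ^(2n)`, which maps onto `P`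
under `y ↦ (y j - y (n + j))_j`.

Every circuit of the simplex is a multiple of some `e_a - e_b`, so `C(Q)` has at most `(2n)²`
directions. On the other side, a `{0, ±1}`-vector `g` whose support has even size is a circuit of
`P`: the rows of `P` are all sign vectors, so it suffices that every `y` orthogonal to all sign
vectors `c ⊥ g` is a multiple of `g`. Take `c` with `c j * g j = ±1` balanced on the support of
`g`; flipping the signs of `c` at two support coordinates of opposite product keeps `c ⊥ g` and
shows that `g j * y j` is constant on the support, and flipping one sign off the support shows that
`y` vanishes there. Free signs on `n - 2` coordinates, together with one bit choosing the first
two coordinates, give `2 ^ (n - 1)` pairwise non-parallel such circuits.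
-/

open scoped Finset

section Polyhedra

variable {ι : Type*} [Fintype ι]

theorem pointedSet_of_isBounded {S : Set (ι → ℝ)} (hS : Bornology.IsBounded S) :
    PointedSet S := by
  intro x v hline
  obtain ⟨R, hR⟩ := hS.exists_norm_le
  by_contra hv
  have hvpos : 0 < ‖v‖ := norm_pos_iff.2 hv
  set t := (|R| + ‖x‖ + 1) / ‖v‖
  have hbound : ‖t • v‖ ≤ R + ‖x‖ := by
    calc ‖t • v‖ = ‖(x + t • v) - x‖ := by rw [add_sub_cancel_left]
      _ ≤ ‖x + t • v‖ + ‖x‖ := norm_sub_le _ _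
      _ ≤ R + ‖x‖ := by gcongr; exact hR _ (hline t)
  rw [norm_smul, Real.norm_of_nonneg (by positivity), div_mul_cancel₀ _ hvpos.ne'] at hbound
  linarith [le_abs_self R]

theorem dotProduct_eq_of_mem_affineSpan {S : Set (ι → ℝ)} {c : ι → ℝ} {s : ℝ}
    (hS : ∀ x ∈ S, c ⬝ᵥ x = s) {x : ι → ℝ} (hx : x ∈ affineSpan ℝ S) : c ⬝ᵥ x = s := by
  refine affineSpan_induction hx hS fun t u v w hu hv hw => ?_
  simp only [vsub_eq_sub, vadd_eq_add, dotProduct_add, dotProduct_smul, dotProduct_sub, hu, hv,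
    hw, sub_self, smul_zero, zero_add]

theorem spanDim_add_one_le {F P : Set (ι → ℝ)} (hFP : F ⊆ P) (hF : F.Nonempty)
    {c : ι → ℝ} {s : ℝ} (hc : ∀ x ∈ F, c ⬝ᵥ x = s) (hout : ∃ y ∈ P, c ⬝ᵥ y ≠ s) :
    spanDim F + 1 ≤ spanDim P := by
  obtain ⟨f, hf⟩ := hF
  obtain ⟨y, hyP, hy⟩ := hout
  have hlt : (affineSpan ℝ F).direction < (affineSpan ℝ P).direction := by
    refine lt_of_le_of_ne (AffineSubspace.direction_le (affineSpan_mono ℝ hFP)) fun heq => hy ?_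
    have hyf : y -ᵥ f ∈ (affineSpan ℝ F).direction := heq ▸
      AffineSubspace.vsub_mem_direction (subset_affineSpan ℝ P hyP)
        (subset_affineSpan ℝ P (hFP hf))
    have := AffineSubspace.vadd_mem_of_mem_direction hyf (subset_affineSpan ℝ F hf)
    rw [vsub_vadd] at this
    exact dotProduct_eq_of_mem_affineSpan hc this
  exact Submodule.finrank_lt_finrank_of_lt hlt

theorem card_le_spanDim_add_one {κ : Type*} [Fintype κ] {S : Set (ι → ℝ)} {p : κ → ι → ℝ}
    (hp : AffineIndependent ℝ p) (hpS : ∀ k, p k ∈ S) : Fintype.card κ ≤ spanDim S + 1 := by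
  cases isEmpty_or_nonempty κ
  · simp
  rw [← hp.finrank_vectorSpan_add_one, spanDim, direction_affineSpan]
  gcongr
  exact Submodule.finrank_mono (vectorSpan_mono ℝ (Set.range_subset_iff.2 hpS))

theorem spanDim_le_card (S : Set (ι → ℝ)) : spanDim S ≤ Fintype.card ι := by
  simpa [spanDim] using Submodule.finrank_le (affineSpan ℝ S).direction

theorem spanDim_univ : spanDim (Set.univ : Set (ι → ℝ)) = Fintype.card ι := by
  rw [spanDim, AffineSubspace.span_univ, AffineSubspace.direction_top, finrank_top,
    Module.finrank_fintype_fun_eq_card]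

theorem affineSpan_eq_top_of_spanDim_eq {S : Set (ι → ℝ)} (hS : S.Nonempty)
    (hdim : spanDim S = Fintype.card ι) : affineSpan ℝ S = ⊤ := by
  rw [← AffineSubspace.direction_eq_top_iff_of_nonempty (hS.mono (subset_affineSpan ℝ S))]
  exact Submodule.eq_top_of_finrank_eq (by simpa [spanDim] using hdim)

theorem card_le_spanDim_of_affineIndependent {κ : Type*} [Fintype κ] [Nonempty κ]
    {P : Set (ι → ℝ)} {c : ι → ℝ} {s : ℝ} (hout : ∃ y ∈ P, c ⬝ᵥ y ≠ s) {p : κ → ι → ℝ}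
    (hp : AffineIndependent ℝ p) (hpP : ∀ k, p k ∈ P) (hps : ∀ k, c ⬝ᵥ p k = s) :
    Fintype.card κ ≤ spanDim P := by
  obtain ⟨k⟩ := ‹Nonempty κ›
  have := spanDim_add_one_le (Set.sep_subset P (c ⬝ᵥ · = s)) ⟨p k, hpP k, hps k⟩
    (fun x hx => hx.2) hout
  have := card_le_spanDim_add_one (S := {x ∈ P | c ⬝ᵥ x = s}) hp fun k => ⟨hpP k, hps k⟩
  omega

theorem isFacet_of_affineIndependent {κ : Type*} [Fintype κ] [Nonempty κ] {P : Set (ι → ℝ)}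
    {c : ι → ℝ} {s : ℝ} (hle : ∀ y ∈ P, c ⬝ᵥ y ≤ s) (hout : ∃ y ∈ P, c ⬝ᵥ y ≠ s)
    {p : κ → ι → ℝ} (hp : AffineIndependent ℝ p) (hpP : ∀ k, p k ∈ P) (hps : ∀ k, c ⬝ᵥ p k = s)
    (hdim : spanDim P ≤ Fintype.card κ) : IsFacet P {x ∈ P | c ⬝ᵥ x = s} := by
  obtain ⟨k⟩ := ‹Nonempty κ›
  refine ⟨Or.inr ⟨c, s, hle, ⟨p k, hpP k, hps k⟩, rfl⟩, le_antisymm ?_ ?_⟩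
  · exact spanDim_add_one_le (Set.sep_subset _ _) ⟨p k, hpP k, hps k⟩ (fun x hx => hx.2) hout
  · exact hdim.trans (card_le_spanDim_add_one hp fun k => ⟨hpP k, hps k⟩)

end Polyhedra

section Circuits

variable {ι p q : Type*} [Fintype ι]

theorem mem_circuits_of_forall_eq_smul {A : Matrix p ι ℝ} {B : Matrix q ι ℝ} {g : ι → ℝ}
    (hgA : A *ᵥ g = 0) (hg : g ≠ 0)
    (h : ∀ y, A *ᵥ y = 0 → (∀ i, (B *ᵥ g) i = 0 → (B *ᵥ y) i = 0) → ∃ t : ℝ, y = t • g) :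
    g ∈ circuits A B := by
  refine ⟨hgA, hg, fun y hyA hy hsupp i hi => ?_⟩
  obtain ⟨t, rfl⟩ := h y hyA fun i hgi => not_not.1 fun hyi => hsupp hyi hgi
  have ht : t ≠ 0 := by rintro rfl; exact hy (zero_smul ℝ g)
  simpa [Matrix.mulVec_smul, ht] using hi

end Circuits

theorem Set.ncard_le_of_pairwise_not_parallel {K V : Type*} [Field K] [AddCommGroup V]
    [Module K V] {S : Set V} (hS : S.Pairwise fun u v => ¬ ∃ c : K, u = c • v) (T : Finset V)
    (hT : ∀ u ∈ S, ∃ t ∈ T, ∃ c : K, u = c • t) : S.Finite ∧ S.ncard ≤ T.card := by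
  choose! f hfT c hc using hT
  have hinj : Set.InjOn f S := by
    intro u hu v hv huv
    by_contra hne
    by_cases hv0 : c v = 0
    · exact hS hv hu (Ne.symm hne) ⟨0, by rw [hc v hv, hv0, zero_smul, zero_smul]⟩
    · refine hS hu hv hne ⟨c u / c v, ?_⟩
      calc u = c u • f v := huv ▸ hc u hu
        _ = (c u / c v) • (c v • f v) := by rw [smul_smul, div_mul_cancel₀ _ hv0]
        _ = (c u / c v) • v := by rw [← hc v hv]
  refine ⟨T.finite_toSet.subset ?_ |>.of_finite_image hinj, ?_⟩
  · rintro _ ⟨u, hu, rfl⟩; exact hfT u hu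
  · simpa using Set.ncard_le_ncard_of_injOn f (fun u hu => hfT u hu) hinj

theorem Finset.exists_subset_two_mul_card_eq {α : Type*} [DecidableEq α] {T : Finset α}
    (heven : Even #T) {i i' : α} (hi : i ∈ T) (hi' : i' ∈ T) (hii' : i ≠ i') :
    ∃ H ⊆ T, i ∈ H ∧ i' ∉ H ∧ 2 * #H = #T := by
  have hcard : #((T.erase i).erase i') = #T - 2 := by
    rw [card_erase_of_mem (by simpa [hii'.symm] using hi'), card_erase_of_mem hi]
    rfl
  have htwo : 1 < #T := one_lt_card.2 ⟨i, hi, i', hi', hii'⟩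
  obtain ⟨H₀, hH₀, hcardH₀⟩ :=
    exists_subset_card_eq (s := (T.erase i).erase i') (n := #T / 2 - 1) (by omega)
  have hiH₀ : i ∉ H₀ := fun h => by simpa using hH₀ h
  have hi'H₀ : i' ∉ H₀ := fun h => by simpa using hH₀ h
  refine ⟨insert i H₀, insert_subset hi fun j hj => mem_of_mem_erase (mem_of_mem_erase (hH₀ hj)),
    mem_insert_self i H₀, by simp [hii'.symm, hi'H₀], ?_⟩
  obtain ⟨r, hr⟩ := heven
  rw [card_insert_of_notMem hiH₀, hcardH₀]
  omega

section SignVectors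

variable {ι : Type*}

def IsSignVector (c : ι → ℝ) : Prop :=
  ∀ j, |c j| = 1

theorem IsSignVector.affineIndependent_single [DecidableEq ι] {c : ι → ℝ} (hc : IsSignVector c) :
    AffineIndependent ℝ fun j => (Pi.single j (c j) : ι → ℝ) := by
  have hc0 : ∀ j, c j ≠ 0 := fun j h => by simpa [h] using hc j
  exact (Pi.linearIndependent_single_of_ne_zero hc0).affineIndependent

variable [Fintype ι]

theorem IsSignVector.dotProduct_le {c : ι → ℝ} (hc : IsSignVector c) (x : ι → ℝ) :
    c ⬝ᵥ x ≤ ∑ j, |x j| :=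
  Finset.sum_le_sum fun j _ => (le_abs_self _).trans_eq (by rw [abs_mul, hc j, one_mul])

theorem exists_isSignVector_dotProduct_eq (x : ι → ℝ) :
    ∃ c, IsSignVector c ∧ c ⬝ᵥ x = ∑ j, |x j| := by
  refine ⟨fun j => if 0 ≤ x j then 1 else -1, fun j => by dsimp only; split_ifs <;> simp, ?_⟩
  refine Finset.sum_congr rfl fun j _ => ?_
  dsimp only
  split_ifs with h
  · rw [one_mul, abs_of_nonneg h]
  · rw [neg_one_mul, abs_of_neg (not_le.1 h)]

variable [DecidableEq ι]

theorem IsSignVector.dotProduct_single_self {c : ι → ℝ} (hc : IsSignVector c) (j : ι) :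
    c ⬝ᵥ Pi.single j (c j) = 1 := by
  rw [dotProduct_single, ← abs_mul_abs_self, hc j, one_mul]

theorem sum_mul_eq_zero_of_forall_isSignVector {g y c : ι → ℝ}
    (hy : ∀ c, IsSignVector c → c ⬝ᵥ g = 0 → c ⬝ᵥ y = 0) (hc : IsSignVector c)
    (hcg : c ⬝ᵥ g = 0) {E : Finset ι} (hE : ∑ j ∈ E, c j * g j = 0) :
    ∑ j ∈ E, c j * y j = 0 := by
  set c' : ι → ℝ := fun j => if j ∈ E then -c j else c j
  have hc' : ∀ x, c' ⬝ᵥ x = c ⬝ᵥ x - 2 * ∑ j ∈ E, c j * x j := fun x => by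
    rw [← Finset.univ_inter E, ← Finset.sum_ite_mem, Finset.mul_sum, dotProduct, dotProduct,
      ← Finset.sum_sub_distrib]
    refine Finset.sum_congr rfl fun j _ => ?_
    by_cases hj : j ∈ E
    · simp [c', hj]; ring
    · simp [c', hj]
  have hflip := hy c' (fun j => by by_cases hj : j ∈ E <;> simp [c', hj, hc j])
    (by rw [hc', hcg, hE, mul_zero, sub_zero])
  rw [hc', hy c hc hcg] at hflip
  linarith

theorem exists_isSignVector_balanced {g : ι → ℝ} (hg : ∀ j, g j = 0 ∨ |g j| = 1)
    (heven : Even #{j | g j ≠ 0}) {i i' : ι} (hi : g i ≠ 0) (hi' : g i' ≠ 0) (hii' : i ≠ i') :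
    ∃ c, IsSignVector c ∧ c ⬝ᵥ g = 0 ∧ c i = g i ∧ c i' = -g i' := by
  set T : Finset ι := {j | g j ≠ 0}
  obtain ⟨H, hHT, hiH, hi'H, hcardH⟩ :=
    Finset.exists_subset_two_mul_card_eq heven (by simpa [T] using hi) (by simpa [T] using hi') hii'
  have hsq : ∀ j, g j ≠ 0 → g j * g j = 1 := fun j hj => by
    rw [← abs_mul_abs_self, (hg j).resolve_left hj, one_mul]
  refine ⟨fun j => if j ∈ H then g j else if g j = 0 then 1 else -g j, fun j => ?_, ?_, ?_, ?_⟩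
  · dsimp only
    split_ifs with hjH hj
    · exact (hg j).resolve_left (by simpa [T] using hHT hjH)
    · simp
    · rw [abs_neg]; exact (hg j).resolve_left hj
  · have hterm : ∀ j, (if j ∈ H then g j else if g j = 0 then 1 else -g j) * g j =
        (if j ∈ H then 1 else 0) - (if j ∈ T \ H then 1 else 0) := fun j => by
      by_cases hj : g j = 0
      · have : j ∉ H := fun h => by simpa [T, hj] using hHT h
        simp [hj, this, T]
      · by_cases hjH : j ∈ H <;> simp [hjH, hj, hsq j hj, T]
    simp only [dotProduct, hterm, Finset.sum_sub_distrib, Finset.sum_boole,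
      Finset.filter_mem_eq_inter, Finset.univ_inter, Finset.card_sdiff_of_subset hHT, Nat.cast_sub (Finset.card_le_card hHT)]
    rw [← hcardH]
    push_cast
    ring
  · simp [hiH]
  · simp [hi'H, hi']

theorem eq_smul_of_forall_isSignVector {g y : ι → ℝ} (hg : ∀ j, g j = 0 ∨ |g j| = 1)
    (heven : Even #{j | g j ≠ 0}) (hg0 : g ≠ 0)
    (hy : ∀ c, IsSignVector c → c ⬝ᵥ g = 0 → c ⬝ᵥ y = 0) : ∃ t : ℝ, y = t • g := by
  obtain ⟨i₀, hi₀⟩ := Function.ne_iff.1 hg0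
  have hsq : ∀ j, g j ≠ 0 → g j * g j = 1 := fun j hj => by
    rw [← abs_mul_abs_self, (hg j).resolve_left hj, one_mul]
  have hpair : ∀ i, g i ≠ 0 → i ≠ i₀ → g i * y i = g i₀ * y i₀ := fun i hi hii₀ => by
    obtain ⟨c, hc, hcg, hci, hci₀⟩ := exists_isSignVector_balanced hg heven hi hi₀ hii₀
    have h := sum_mul_eq_zero_of_forall_isSignVector hy hc hcg (E := {i, i₀})
      (by rw [Finset.sum_pair hii₀, hci, hci₀, hsq i hi, neg_mul, hsq i₀ hi₀]; ring)
    rw [Finset.sum_pair hii₀, hci, hci₀] at h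
    linarith
  obtain ⟨i₁, hi₁, hi₁₀⟩ : ∃ i₁, g i₁ ≠ 0 ∧ i₁ ≠ i₀ := by
    by_contra! h
    have hT : ({j | g j ≠ 0} : Finset ι) = {i₀} :=
      Finset.eq_singleton_iff_unique_mem.2 ⟨by simpa using hi₀, fun j hj => h j (by simpa using hj)⟩
    rw [hT, Finset.card_singleton] at heven
    exact Nat.not_even_one heven
  have hoff : ∀ j, g j = 0 → y j = 0 := fun j hj => by
    obtain ⟨c, hc, hcg, -⟩ := exists_isSignVector_balanced hg heven hi₁ hi₀ hi₁₀
    have h := sum_mul_eq_zero_of_forall_isSignVector hy hc hcg (E := {j}) (by simp [hj])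
    rw [Finset.sum_singleton] at h
    exact (mul_eq_zero.1 h).resolve_left fun h0 => by simpa [h0] using hc j
  refine ⟨g i₀ * y i₀, funext fun j => ?_⟩
  by_cases hj : g j = 0
  · simp [hj, hoff j hj]
  · have hgy : g j * y j = g i₀ * y i₀ := by
      rcases eq_or_ne j i₀ with rfl | hji₀
      · rfl
      · exact hpair j hj hji₀
    calc y j = g j * (g j * y j) := by rw [← mul_assoc, hsq j hj, one_mul]
      _ = (g i₀ * y i₀) * g j := by rw [hgy, mul_comm]

end SignVectors

section CrossPolytope

variable (n : ℕ)

/-- Row `i` is the sign vector `j ↦ (-1) ^ (digit j of i in base 2)`, so the rows run through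
all `2 ^ n` sign vectors. -/
def crossPolytopeMatrix : Matrix (Fin (2 ^ n)) (Fin n) ℝ :=
  fun i j => (-1) ^ (finFunctionFinEquiv.symm i j : ℕ)

def crossPolytope : Set (Fin n → ℝ) :=
  {x | ∑ j, |x j| ≤ 1}

variable {n}

theorem isSignVector_crossPolytopeMatrix (i : Fin (2 ^ n)) :
    IsSignVector (crossPolytopeMatrix n i) :=
  fun j => by simp [crossPolytopeMatrix]

theorem exists_crossPolytopeMatrix_eq {c : Fin n → ℝ} (hc : IsSignVector c) :
    ∃ i, crossPolytopeMatrix n i = c := by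
  refine ⟨finFunctionFinEquiv fun j => if c j = 1 then 0 else 1, funext fun j => ?_⟩
  rcases (abs_eq zero_le_one).1 (hc j) with h | h <;> norm_num [crossPolytopeMatrix, h]

theorem crossPolytope_eq_polySet :
    crossPolytope n = polySet (0 : Matrix (Fin 0) (Fin n) ℝ) 0 (crossPolytopeMatrix n) 1 := by
  ext x
  refine ⟨fun hx => ⟨Subsingleton.elim _ _, fun i =>
    ((isSignVector_crossPolytopeMatrix i).dotProduct_le x).trans hx⟩, fun hx => ?_⟩
  obtain ⟨c, hc, hcx⟩ := exists_isSignVector_dotProduct_eq x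
  obtain ⟨i, rfl⟩ := exists_crossPolytopeMatrix_eq hc
  show ∑ j, |x j| ≤ 1
  exact hcx ▸ hx.2 i

theorem isBounded_crossPolytope : Bornology.IsBounded (crossPolytope n) :=
  (Metric.isBounded_closedBall (x := 0) (r := 1)).subset fun x hx =>
    mem_closedBall_zero_iff.2 <| (pi_norm_le_iff_of_nonneg zero_le_one).2 fun j =>
      (Finset.single_le_sum (fun j _ => abs_nonneg (x j)) (Finset.mem_univ j)).trans hx

theorem zero_mem_crossPolytope : (0 : Fin n → ℝ) ∈ crossPolytope n := by
  simp [crossPolytope]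

theorem single_mem_crossPolytope {c : Fin n → ℝ} (hc : IsSignVector c) (j : Fin n) :
    Pi.single j (c j) ∈ crossPolytope n := by
  classical
  rw [crossPolytope, Set.mem_ofPred_eq, Finset.sum_eq_single j (fun l _ hl => by simp [hl])
    (by simp), Pi.single_eq_same, hc j]

theorem isFacet_crossPolytope (hn : 0 < n) (i : Fin (2 ^ n)) :
    IsFacet (crossPolytope n) {x ∈ crossPolytope n | (crossPolytopeMatrix n *ᵥ x) i = 1} := by
  have : Nonempty (Fin n) := ⟨⟨0, hn⟩⟩
  have hc := isSignVector_crossPolytopeMatrix i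
  exact isFacet_of_affineIndependent (fun y hy => (hc.dotProduct_le y).trans hy)
    ⟨0, zero_mem_crossPolytope, by simp⟩ hc.affineIndependent_single
    (single_mem_crossPolytope hc) hc.dotProduct_single_self (spanDim_le_card _)

theorem affineSpan_crossPolytope (hn : 0 < n) : affineSpan ℝ (crossPolytope n) = ⊤ := by
  have : Nonempty (Fin n) := ⟨⟨0, hn⟩⟩
  have hc : IsSignVector (1 : Fin n → ℝ) := fun j => by simp
  refine affineSpan_eq_top_of_spanDim_eq ⟨0, zero_mem_crossPolytope⟩
    (le_antisymm (spanDim_le_card _) ?_)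
  exact card_le_spanDim_of_affineIndependent ⟨0, zero_mem_crossPolytope, by simp⟩
    hc.affineIndependent_single (single_mem_crossPolytope hc) hc.dotProduct_single_self

theorem irredundant_crossPolytope (hn : 0 < n) :
    Irredundant (0 : Matrix (Fin 0) (Fin n) ℝ) 0 (crossPolytopeMatrix n) 1 (crossPolytope n) :=
  ⟨crossPolytope_eq_polySet, by ext x; simp [affineSpan_crossPolytope hn],
    isFacet_crossPolytope hn⟩

theorem mem_circuits_crossPolytopeMatrix {g : Fin n → ℝ} (hg : ∀ j, g j = 0 ∨ |g j| = 1)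
    (heven : Even #{j | g j ≠ 0}) (hg0 : g ≠ 0) :
    g ∈ circuits (0 : Matrix (Fin 0) (Fin n) ℝ) (crossPolytopeMatrix n) :=
  mem_circuits_of_forall_eq_smul (Subsingleton.elim _ _) hg0 fun _ _ hy =>
    eq_smul_of_forall_isSignVector hg heven hg0 fun c hc hcg => by
      obtain ⟨i, rfl⟩ := exists_crossPolytopeMatrix_eq hc
      exact hy i hcg

end CrossPolytope

section StdSimplex

variable {ι : Type*} [Fintype ι]

theorem ones_mulVec (y : ι → ℝ) :
    (of fun _ _ => 1 : Matrix (Fin 1) ι ℝ) *ᵥ y = fun _ => ∑ l, y l := by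
  ext; simp [mulVec, dotProduct]

variable [DecidableEq ι]

theorem neg_one_mulVec_apply (y : ι → ℝ) (k : ι) : ((-1 : Matrix ι ι ℝ) *ᵥ y) k = -y k := by
  simp [neg_mulVec]

theorem stdSimplex_eq_polySet :
    stdSimplex ℝ ι = polySet (of fun _ _ => 1 : Matrix (Fin 1) ι ℝ) 1 (-1 : Matrix ι ι ℝ) 0 := by
  ext y
  simp [stdSimplex, polySet, ones_mulVec, neg_mulVec, funext_iff, Pi.le_def, and_comm]

theorem spanDim_stdSimplex [Nonempty ι] : spanDim (stdSimplex ℝ ι) + 1 = Fintype.card ι := by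
  refine le_antisymm ?_ ?_
  · have hsum : ∀ y ∈ stdSimplex ℝ ι, 1 ⬝ᵥ y = 1 := fun y hy => by
      rw [one_dotProduct]; exact hy.2
    have := spanDim_add_one_le (Set.subset_univ _)
      ⟨_, single_mem_stdSimplex ℝ (Classical.arbitrary ι)⟩ hsum ⟨0, Set.mem_univ _, by simp⟩
    rwa [spanDim_univ] at this
  · exact card_le_spanDim_add_one (Pi.linearIndependent_single_one ι ℝ).affineIndependent
      (single_mem_stdSimplex ℝ)

theorem affineSpan_stdSimplex :
    (affineSpan ℝ (stdSimplex ℝ ι) : Set (ι → ℝ)) = {y | ∑ l, y l = 1} := by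
  have hsum : ∀ y ∈ affineSpan ℝ (stdSimplex ℝ ι), (1 : ι → ℝ) ⬝ᵥ y = 1 := fun _ =>
    dotProduct_eq_of_mem_affineSpan fun x hx => (one_dotProduct x).trans hx.2
  ext y
  refine ⟨fun hy => (one_dotProduct y).symm.trans (hsum y hy), fun hy => ?_⟩
  have hmem := affineCombination_mem_affineSpan (s := Finset.univ) (k := ℝ) hy
    fun l => (Pi.single l 1 : ι → ℝ)
  rw [Finset.affineCombination_eq_linear_combination _ _ _ hy] at hmem
  have hy' : ∑ l, y l • (Pi.single l 1 : ι → ℝ) = y := by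
    simpa [← Pi.single_smul] using Finset.univ_sum_single y
  rw [hy'] at hmem
  exact affineSpan_mono ℝ (Set.range_subset_iff.2 (single_mem_stdSimplex ℝ)) hmem

theorem isFacet_stdSimplex (h : 1 < Fintype.card ι) (k : ι) :
    IsFacet (stdSimplex ℝ ι)
      {y ∈ stdSimplex ℝ ι | ((-1 : Matrix ι ι ℝ) *ᵥ y) k = (0 : ι → ℝ) k} := by
  obtain ⟨l, hl⟩ := Fintype.exists_ne_of_one_lt_card h k
  have : Nonempty {l // l ≠ k} := ⟨⟨l, hl⟩⟩
  have : Nonempty ι := ⟨k⟩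
  have hrow : ∀ y, (-1 : Matrix ι ι ℝ) k ⬝ᵥ y = -y k := fun y => neg_one_mulVec_apply y k
  refine isFacet_of_affineIndependent (p := fun l : {l // l ≠ k} => Pi.single l.1 1)
    (fun y hy => by rw [hrow]; simpa using hy.1 k)
    ⟨_, single_mem_stdSimplex ℝ k, by simp⟩
    ((Pi.linearIndependent_single_one ι ℝ).comp _ Subtype.val_injective).affineIndependent
    (fun l => single_mem_stdSimplex ℝ l.1) (fun l => by simp [l.2.symm]) ?_
  have := spanDim_stdSimplex (ι := ι)
  rw [Fintype.card_subtype_compl, Fintype.card_subtype_eq]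
  omega

theorem irredundant_stdSimplex (h : 1 < Fintype.card ι) :
    Irredundant (of fun _ _ => 1 : Matrix (Fin 1) ι ℝ) 1 (-1 : Matrix ι ι ℝ) 0 (stdSimplex ℝ ι) :=
  ⟨stdSimplex_eq_polySet, by rw [affineSpan_stdSimplex]; ext y; simp [ones_mulVec, funext_iff],
    isFacet_stdSimplex h⟩

theorem exists_eq_smul_of_mem_circuits_stdSimplex {g : ι → ℝ}
    (hg : g ∈ circuits (of fun _ _ => 1 : Matrix (Fin 1) ι ℝ) (-1 : Matrix ι ι ℝ)) :
    ∃ a b : ι, ∃ t : ℝ, g = t • (Pi.single a 1 - Pi.single b 1) := by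
  obtain ⟨hgA, hg0, hmin⟩ := hg
  have hsum : ∑ l, g l = 0 := by simpa [ones_mulVec] using congrFun hgA 0
  obtain ⟨a, ha⟩ := Function.ne_iff.1 hg0
  obtain ⟨b, hb, hba⟩ : ∃ b, g b ≠ 0 ∧ b ≠ a := by
    by_contra! h
    exact ha (by rwa [Fintype.sum_eq_single a fun l hl => not_not.1 (mt (h l) hl)] at hsum)
  set y : ι → ℝ := Pi.single a 1 - Pi.single b 1
  have hyA : (of fun _ _ => 1 : Matrix (Fin 1) ι ℝ) *ᵥ y = 0 := by
    ext; simp [ones_mulVec, y, Finset.sum_sub_distrib]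
  have hy0 : y ≠ 0 := fun h => by simpa [y, hba.symm] using congrFun h a
  have hsupp := hmin y hyA hy0 fun l hl => by
    simp only [Set.mem_ofPred_eq, neg_one_mulVec_apply, neg_ne_zero] at hl ⊢
    by_cases hla : l = a
    · exact hla ▸ ha
    · by_cases hlb : l = b
      · exact hlb ▸ hb
      · simp [y, hla, hlb] at hl
  have hoff : ∀ l, l ≠ a → l ≠ b → g l = 0 := fun l hla hlb => by
    by_contra hl
    have := @hsupp l (by simpa [neg_one_mulVec_apply] using hl)
    simp [neg_one_mulVec_apply, y, hla, hlb] at this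
  have hgb : g b = -g a := by
    rw [Fintype.sum_eq_add a b hba.symm fun l hl => hoff l hl.1 hl.2] at hsum
    linarith
  refine ⟨a, b, g a, funext fun l => ?_⟩
  by_cases hla : l = a
  · subst hla; simp [hba.symm]
  · by_cases hlb : l = b
    · subst hlb; simp [hla, hgb]
    · simp [hla, hlb, hoff l hla hlb]

theorem ncard_le_of_pairwise_circuits_stdSimplex {S : Set (ι → ℝ)}
    (hS : S ⊆ circuits (of fun _ _ => 1 : Matrix (Fin 1) ι ℝ) (-1 : Matrix ι ι ℝ))
    (hpair : S.Pairwise fun u v => ¬ ∃ c : ℝ, u = c • v) :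
    S.Finite ∧ S.ncard ≤ Fintype.card ι ^ 2 := by
  have := Set.ncard_le_of_pairwise_not_parallel hpair
    (Finset.univ.image fun p : ι × ι => Pi.single p.1 1 - Pi.single p.2 1) fun u hu => by
      obtain ⟨a, b, t, rfl⟩ := exists_eq_smul_of_mem_circuits_stdSimplex (hS hu)
      exact ⟨_, Finset.mem_image_of_mem _ (Finset.mem_univ (a, b)), t, rfl⟩
  exact ⟨this.1, this.2.trans (Finset.card_image_le.trans (by simp [sq]))⟩

end StdSimplex

section Projection

variable (n : ℕ)

def foldDiff : (Fin (n + n) → ℝ) →ₗ[ℝ] Fin n → ℝ :=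
  LinearMap.funLeft ℝ ℝ (Fin.castAdd n) - LinearMap.funLeft ℝ ℝ (Fin.natAdd n)

variable {n}

theorem foldDiff_apply (y : Fin (n + n) → ℝ) (j : Fin n) :
    foldDiff n y j = y (Fin.castAdd n j) - y (Fin.natAdd n j) :=
  rfl

theorem foldDiff_image_stdSimplex (hn : 0 < n) :
    foldDiff n '' stdSimplex ℝ (Fin (n + n)) = crossPolytope n := by
  ext x
  constructor
  · rintro ⟨y, ⟨hy0, hy1⟩, rfl⟩
    calc ∑ j, |foldDiff n y j| ≤ ∑ j, (y (Fin.castAdd n j) + y (Fin.natAdd n j)) :=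
          Finset.sum_le_sum fun j _ => by
            rw [foldDiff_apply]
            exact (abs_sub _ _).trans_eq (by rw [abs_of_nonneg (hy0 _), abs_of_nonneg (hy0 _)])
      _ = 1 := by rw [Finset.sum_add_distrib, ← Fin.sum_univ_add, hy1]
  · intro hx
    have hn' : (0 : ℝ) < n + n := by positivity
    set t := (1 - ∑ j, |x j|) / (n + n)
    have ht : 0 ≤ t := div_nonneg (sub_nonneg.2 hx) hn'.le
    refine ⟨Fin.append (fun j => (x j)⁺ + t) (fun j => (x j)⁻ + t), ⟨fun l => ?_, ?_⟩, ?_⟩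
    · refine Fin.addCases (fun j => ?_) (fun j => ?_) l
      · rw [Fin.append_left]; exact add_nonneg (posPart_nonneg (x j)) ht
      · rw [Fin.append_right]; exact add_nonneg (negPart_nonneg (x j)) ht
    · rw [Fin.sum_univ_add]
      simp only [Fin.append_left, Fin.append_right, Finset.sum_add_distrib, Finset.sum_const,
        Finset.card_univ, Fintype.card_fin, nsmul_eq_mul]
      rw [add_add_add_comm, ← Finset.sum_add_distrib]
      simp only [posPart_add_negPart, t]
      field_simp
      ring
    · ext j
      rw [foldDiff_apply, Fin.append_left, Fin.append_right, add_sub_add_right_eq_sub,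
        posPart_sub_negPart]

end Projection

section EvenSignVectors

/-- Coordinates `2, …, k + 1` carry the signs `σ`; the first two coordinates are `(1, ±1)` when `k`
is even and `(1, 0)` or `(0, 1)` when `k` is odd, so that the support always has even size. -/
def evenSignVector (k : ℕ) (b : Bool) (σ : Fin k → Bool) : Fin (k + 2) → ℝ :=
  Fin.cons (if Even k ∨ b then 1 else 0)
    (Fin.cons (if Even k then (if b then 1 else -1) else if b then 0 else 1)
      fun i => if σ i then 1 else -1 : Fin (k + 1) → ℝ)

variable {k : ℕ}

theorem evenSignVector_eq_zero_or_abs_eq_one (b : Bool) (σ : Fin k → Bool) (j : Fin (k + 2)) :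
    evenSignVector k b σ j = 0 ∨ |evenSignVector k b σ j| = 1 := by
  refine Fin.cases ?_ (Fin.cases ?_ fun i => ?_) j <;>
    simp only [evenSignVector, Fin.cons_zero, Fin.cons_succ] <;> split_ifs <;> simp

theorem card_support_evenSignVector (b : Bool) (σ : Fin k → Bool) :
    #{j | evenSignVector k b σ j ≠ 0} = if Even k then k + 2 else k + 1 := by
  rw [Finset.card_filter, Fin.sum_univ_succ, Fin.sum_univ_succ]
  have hσ : ∀ i, (if σ i then (1 : ℝ) else -1) ≠ 0 := fun i => by split_ifs <;> norm_num
  simp only [evenSignVector, Fin.cons_zero, Fin.cons_succ, ne_eq, hσ, not_false_eq_true,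
    if_true, Finset.sum_const, Finset.card_univ, Fintype.card_fin, smul_eq_mul, mul_one]
  split_ifs <;> simp_all <;> omega

theorem evenSignVector_eq_smul {b b' : Bool} {σ σ' : Fin k → Bool} {c : ℝ}
    (h : evenSignVector k b σ = c • evenSignVector k b' σ') : b = b' ∧ σ = σ' := by
  have h0 := congrFun h 0
  have h1 := congrFun h 1
  simp only [evenSignVector, Pi.smul_apply, smul_eq_mul, Fin.cons_zero] at h0 h1
  obtain ⟨rfl, rfl⟩ : c = 1 ∧ b = b' := by
    by_cases hk : Even k <;> cases b <;> cases b' <;> simp [hk] at h0 h1 ⊢ <;> linarith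
  refine ⟨rfl, funext fun i => ?_⟩
  have hi := congrFun h i.succ.succ
  simp only [evenSignVector, Pi.smul_apply, smul_eq_mul, Fin.cons_succ, one_mul] at hi
  cases hσ : σ i <;> cases hσ' : σ' i <;> simp [hσ, hσ'] at hi ⊢ <;> norm_num at hi

theorem exists_pairwise_not_parallel_circuits_crossPolytope {n : ℕ} (hn : 2 ≤ n) :
    ∃ S ⊆ circuits (0 : Matrix (Fin 0) (Fin n) ℝ) (crossPolytopeMatrix n),
      S.Finite ∧ 2 ^ (n - 1) ≤ S.ncard ∧ S.Pairwise fun u v => ¬ ∃ c : ℝ, u = c • v := by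
  obtain ⟨k, rfl⟩ : ∃ k, n = k + 2 := ⟨n - 2, by omega⟩
  refine ⟨Set.range fun p : Bool × (Fin k → Bool) => evenSignVector k p.1 p.2, ?_,
    Set.finite_range _, ?_, ?_⟩
  · rintro _ ⟨⟨b, σ⟩, rfl⟩
    refine mem_circuits_crossPolytopeMatrix (evenSignVector_eq_zero_or_abs_eq_one b σ) ?_
      fun h => ?_
    · rw [card_support_evenSignVector]
      split_ifs with hk
      · exact hk.add (by decide)
      · exact (Nat.not_even_iff_odd.1 hk).add_one
    · have h0 := congrFun h 0
      have h1 := congrFun h 1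
      simp only [evenSignVector, Fin.cons_zero, Pi.zero_apply] at h0 h1
      cases b <;> by_cases hk : Even k <;> simp [hk] at h0 h1
  · rw [Set.ncard_range_of_injective fun p q hpq => Prod.ext_iff.2 (evenSignVector_eq_smul
      (c := 1) (by simpa using hpq))]
    simp [pow_succ, mul_comm]
  · rintro _ ⟨⟨b, σ⟩, rfl⟩ _ ⟨⟨b', σ'⟩, rfl⟩ hne ⟨c, hc⟩
    obtain ⟨rfl, rfl⟩ := evenSignVector_eq_smul hc
    exact hne rfl

end EvenSignVectors

/-- For every `n ≥ 3`, there exist pointed polyhedra `P ⊂ ℝⁿ`, `Q ⊂ ℝᵐ` with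
irredundant descriptions and a linear `π` with `π(Q) = P` such that `C(P)` contains at least
`2^(n-1)` pairwise non-parallel vectors while every pairwise non-parallel subset of `C(Q)` has
cardinality at most `4n²`. -/
theorem stmt_9 (n : ℕ) (hn : 3 ≤ n) :
    ∃ (m pP qP pQ qQ : ℕ)
      (AP : Matrix (Fin pP) (Fin n) ℝ) (bP : Fin pP → ℝ)
      (BP : Matrix (Fin qP) (Fin n) ℝ) (dP : Fin qP → ℝ)
      (AQ : Matrix (Fin pQ) (Fin m) ℝ) (bQ : Fin pQ → ℝ)
      (BQ : Matrix (Fin qQ) (Fin m) ℝ) (dQ : Fin qQ → ℝ)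
      (P : Set (Fin n → ℝ)) (Q : Set (Fin m → ℝ))
      (π : (Fin m → ℝ) →ₗ[ℝ] (Fin n → ℝ)),
      Irredundant AP bP BP dP P ∧ Irredundant AQ bQ BQ dQ Q ∧
      PointedSet P ∧ PointedSet Q ∧
      (fun x => π x) '' Q = P ∧
      (∃ S : Set (Fin n → ℝ), S ⊆ circuits AP BP ∧ S.Finite ∧ 2 ^ (n - 1) ≤ S.ncard ∧
        S.Pairwise fun u v => ¬ ∃ c : ℝ, u = c • v) ∧
      (∀ S : Set (Fin m → ℝ), S ⊆ circuits AQ BQ →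
        (S.Pairwise fun u v => ¬ ∃ c : ℝ, u = c • v) →
        S.Finite ∧ S.ncard ≤ 4 * n ^ 2) := by
  refine ⟨n + n, 0, 2 ^ n, 1, n + n, 0, 0, crossPolytopeMatrix n, 1, of fun _ _ => 1, 1, -1, 0,
    crossPolytope n, stdSimplex ℝ _, foldDiff n, irredundant_crossPolytope (by omega),
    irredundant_stdSimplex (by simp only [Fintype.card_fin]; omega),
    pointedSet_of_isBounded isBounded_crossPolytope, pointedSet_of_isBounded (bounded_stdSimplex _),
    foldDiff_image_stdSimplex (by omega),
    exists_pairwise_not_parallel_circuits_crossPolytope (by omega),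
    fun S hS hpair => ?_⟩
  obtain ⟨hfin, hcard⟩ := ncard_le_of_pairwise_circuits_stdSimplex hS hpair
  exact ⟨hfin, hcard.trans_eq (by simp only [Fintype.card_fin]; ring)⟩
end
end

section
/- Let A ∈ ℝ^{p×n}, B ∈ ℝ^{q×n}, b ∈ ℝᵖ, d ∈ ℝ^q define a polyhedron with ker(A) ∩ ker(B) = {0}. Then a vector g ∈ ℝⁿ with Ag = b is a basic solution of the system Ax = b, Bx ≤ d if and only if supp(Bg − d) is inclusion-minimal in the family {supp(By − d) : y ∈ ℝⁿ, Ay = b}, where supp(z) = {i : z_i ≠ 0}. -/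
open Matrix

noncomputable section

/-! By duality, the rows of `A` and the tight rows of `B` at `g` span `ℝⁿ` iff no nonzero `v`
satisfies `Av = 0` and `B_i v = 0` for every tight row `i`. If the rows span, a `y` with `Ay = b`
whose support is contained in that of `g` is tight wherever `g` is, so `y - g` is such a `v` and
`y = g`. Otherwise pointedness gives a row `j` with `B_j v ≠ 0`, necessarily loose at `g`; moving
from `g` along `v` until row `j` becomes tight keeps the tight rows of `g` and strictly shrinks the
support of `Bx - d`. -/

theorem span_eq_top_iff_forall_dotProduct_eq_zero {K ι : Type*} [Field K] [Fintype ι]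
    {S : Set (ι → K)} :
    Submodule.span K S = ⊤ ↔ ∀ v : ι → K, (∀ w ∈ S, w ⬝ᵥ v = 0) → v = 0 := by
  classical
  have mem_dualAnnihilator (v : ι → K) :
      dotProductEquiv K ι v ∈ (Submodule.span K S).dualAnnihilator ↔ ∀ w ∈ S, w ⬝ᵥ v = 0 := by
    rw [← SetLike.mem_coe, Submodule.coe_dualAnnihilator_span]
    simp [Set.subset_def, dotProduct_comm v]
  rw [← Submodule.dualAnnihilator_eq_bot_iff, Submodule.eq_bot_iff,
    (dotProductEquiv K ι).surjective.forall]
  simp only [mem_dualAnnihilator, LinearEquiv.map_eq_zero_iff]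

section BasicSolution

variable {p q n : Type*} [Fintype n] {A : Matrix p n ℝ} {b : p → ℝ} {B : Matrix q n ℝ}
  {d : q → ℝ} {g : n → ℝ}

theorem isBasicSolution_iff (hg : A *ᵥ g = b) :
    IsBasicSolution A b B d g ↔
      ∀ v, A *ᵥ v = 0 → (∀ i, (B *ᵥ g) i = d i → (B *ᵥ v) i = 0) → v = 0 := by
  simp only [IsBasicSolution, hg, true_and, span_eq_top_iff_forall_dotProduct_eq_zero,
    Set.mem_union, or_imp, forall_and, Set.forall_mem_range, Set.forall_mem_image,
    and_imp, funext_iff (f := A *ᵥ _)]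
  rfl

theorem IsBasicSolution.eq_of_support_subset (hbasic : IsBasicSolution A b B d g) {y : n → ℝ}
    (hy : A *ᵥ y = b) (hsub : {i | (B *ᵥ y) i ≠ d i} ⊆ {i | (B *ᵥ g) i ≠ d i}) : y = g := by
  refine sub_eq_zero.mp <| (isBasicSolution_iff hbasic.1).1 hbasic _ ?_ fun i hi => ?_
  · rw [mulVec_sub, hy, hbasic.1, sub_self]
  · have hyi : (B *ᵥ y) i = d i := not_not.mp fun hne => hsub hne hi
    rw [mulVec_sub, Pi.sub_apply, hyi, hi, sub_self]

end BasicSolution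

theorem exists_support_ssubset_of_mulVec_ne_zero {K p q n : Type*} [Field K] [Fintype n]
    {A : Matrix p n K} {B : Matrix q n K} {d : q → K} {g v : n → K} (hAv : A *ᵥ v = 0)
    (htight : ∀ i, (B *ᵥ g) i = d i → (B *ᵥ v) i = 0) {j : q} (hj : (B *ᵥ v) j ≠ 0) :
    ∃ y, A *ᵥ y = A *ᵥ g ∧ {i | (B *ᵥ y) i ≠ d i} ⊂ {i | (B *ᵥ g) i ≠ d i} := by
  set t := (d j - (B *ᵥ g) j) / (B *ᵥ v) j
  have hBy (i : q) : (B *ᵥ (g + t • v)) i = (B *ᵥ g) i + t * (B *ᵥ v) i := by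
    simp [mulVec_add, mulVec_smul]
  refine ⟨g + t • v, by simp [mulVec_add, mulVec_smul, hAv], ?_, ?_⟩
  · intro i hi hgi
    exact hi (by rw [hBy, htight i hgi, hgi, mul_zero, add_zero])
  · intro hsub
    exact hsub (fun hgj => hj (htight j hgj)) (by rw [hBy, div_mul_cancel₀ _ hj]; ring)

/-- For a pointed system `Ax = b, Bx ≤ d`, a vector `g` with `Ag = b` is a basic
solution iff `supp(Bg - d)` is inclusion-minimal in `{supp(By - d) : Ay = b}`. -/
theorem stmt_10 {p q n : ℕ}
    (A : Matrix (Fin p) (Fin n) ℝ) (b : Fin p → ℝ)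
    (B : Matrix (Fin q) (Fin n) ℝ) (d : Fin q → ℝ)
    (hpt : ∀ v : Fin n → ℝ, A.mulVec v = 0 → B.mulVec v = 0 → v = 0)
    (g : Fin n → ℝ) (hg : A.mulVec g = b) :
    IsBasicSolution A b B d g ↔
      ∀ y : Fin n → ℝ, A.mulVec y = b →
        {i | B.mulVec y i ≠ d i} ⊆ {i | B.mulVec g i ≠ d i} →
        {i | B.mulVec g i ≠ d i} ⊆ {i | B.mulVec y i ≠ d i} := by
  refine ⟨fun hbasic y hy hsub => (hbasic.eq_of_support_subset hy hsub).symm ▸ subset_rfl,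
    fun hmin => (isBasicSolution_iff hg).2 fun v hAv htight => hpt v hAv ?_⟩
  by_contra hBv
  obtain ⟨j, hj⟩ := Function.ne_iff.mp hBv
  obtain ⟨y, hy, hss⟩ := exists_support_ssubset_of_mulVec_ne_zero hAv htight hj
  exact hss.2 (hmin y (hy.trans hg) hss.1)
end
end

section
/- Let n ≥ 2 and δ ∈ (1/2, 1), and let Q'_n = {x ∈ ℝⁿ : yᵀx ≤ 1 for all y ∈ {−1,1}ⁿ, and −δ ≤ x_i ≤ δ for all i ∈ [n]}. Then Q'_n has exactly 4n(n−1) vertices, and every point of {−δ, δ}ⁿ is a basic solution of the defining system (whose inequality rows are yᵀx ≤ 1 for y ∈ {−1,1}ⁿ together with x_i ≤ δ and −x_i ≤ δ for i ∈ [n], with no equality rows). -/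
/-!
In terms of coordinates, `Q'_n = {x : ∑ |xₖ| ≤ 1, |xₖ| ≤ δ}`. A point of `Q'_n` can be moved both
ways along a line inside `Q'_n` if `∑ |xₖ| < 1` (push a coordinate with `|xₖ| < δ`), or if two
coordinates lie strictly between `0` and `δ` in absolute value (trade `ℓ¹` mass between them).
Since `2δ > 1`, at most one coordinate has absolute value `δ`, so a vertex has one entry `±δ`, one
entry `±(1 - δ)` and zeros elsewhere; conversely each such point `v` is the unique maximiser of
`x ↦ v ⬝ᵥ x`. There are `n (n - 1) · 2 · 2` of them. At a point of `{±δ}ⁿ`, for every `i` one of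
the rows `±eᵢ` is tight, so the tight rows span `ℝⁿ`.
-/

open Matrix

noncomputable section

/-- The inequality matrix of the cropped cross-polytope: rows `yᵀ` for `y ∈ {-1,1}ⁿ`
(indexed by `Fin n → Bool`), together with rows `eᵢᵀ` and `-eᵢᵀ`. -/
def cropB (n : ℕ) : Matrix ((Fin n → Bool) ⊕ (Fin n ⊕ Fin n)) (Fin n) ℝ :=
  Matrix.of (Sum.elim
    (fun y j => if y j then 1 else -1)
    (Sum.elim (fun i j => if j = i then 1 else 0) (fun i j => if j = i then -1 else 0)))

/-- Right-hand sides: `1` for the cross-polytope rows, `δ` for the box rows. -/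
def cropd (n : ℕ) (δ : ℝ) : ((Fin n → Bool) ⊕ (Fin n ⊕ Fin n)) → ℝ :=
  Sum.elim (fun _ => 1) (fun _ => δ)

section Vertex

variable {ι : Type*} [Fintype ι] {P : Set (ι → ℝ)} {v : ι → ℝ}

theorem IsVertex.mem (h : IsVertex P v) : v ∈ P := by
  rcases h with h | ⟨c, s, -, -, h⟩
  · exact h ▸ rfl
  · exact (h ▸ Set.mem_singleton v : v ∈ {x ∈ P | c ⬝ᵥ x = s}).1

theorem IsVertex.eq_zero_of_add_smul_mem (h : IsVertex P v) {u : ι → ℝ} {ε : ℝ} (hε : 0 < ε)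
    (hu : ∀ η, |η| ≤ ε → v + η • u ∈ P) : u = 0 := by
  have hplus := hu ε (abs_of_pos hε).le
  have hminus := hu (-ε) (abs_neg ε ▸ (abs_of_pos hε).le)
  suffices v + ε • u = v by simpa [hε.ne'] using this
  rcases h with h | ⟨c, s, hle, -, h⟩
  · exact (h ▸ hplus : v + ε • u ∈ ({v} : Set (ι → ℝ)))
  · have hv : v ∈ {x ∈ P | c ⬝ᵥ x = s} := h ▸ Set.mem_singleton v
    have h₁ := hle _ hplus
    have h₂ := hle _ hminus
    simp only [dotProduct_add, dotProduct_smul, smul_eq_mul, neg_mul] at h₁ h₂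
    have : v + ε • u ∈ {x ∈ P | c ⬝ᵥ x = s} := by
      refine ⟨hplus, ?_⟩
      simp only [dotProduct_add, dotProduct_smul, smul_eq_mul]
      linarith [hv.2]
    exact (h ▸ this : v + ε • u ∈ ({v} : Set (ι → ℝ)))

end Vertex

section AbsSum

variable {ι : Type*} [Fintype ι] (x : ι → ℝ) {i j k : ι}

theorem abs_add_abs_le_sum_abs [DecidableEq ι] (hij : i ≠ j) : |x i| + |x j| ≤ ∑ l, |x l| := by
  rw [← Finset.sum_pair hij (f := fun l => |x l|)]
  exact Finset.sum_le_univ_sum_of_nonneg fun _ => abs_nonneg _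

theorem abs_add_abs_add_abs_le_sum_abs [DecidableEq ι] (hij : i ≠ j) (hik : i ≠ k) (hjk : j ≠ k) :
    |x i| + |x j| + |x k| ≤ ∑ l, |x l| := by
  have : ∑ l ∈ {i, j, k}, |x l| = |x i| + |x j| + |x k| := by
    rw [Finset.sum_insert (by simp [hij, hik]), Finset.sum_pair hjk, add_assoc]
  rw [← this]
  exact Finset.sum_le_univ_sum_of_nonneg fun _ => abs_nonneg _

theorem sum_abs_eq_of_eq_zero (hij : i ≠ j) (h : ∀ k, k ≠ i → k ≠ j → x k = 0) :
    ∑ l, |x l| = |x i| + |x j| :=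
  Fintype.sum_eq_add i j hij fun k hk => by simp [h k hk.1 hk.2]

theorem sum_abs_add_eq (d : ι → ℝ) (hij : i ≠ j) (hd : ∀ k, k ≠ i → k ≠ j → d k = 0) :
    ∑ l, |x l + d l| + (|x i| + |x j|) = ∑ l, |x l| + (|x i + d i| + |x j + d j|) := by
  have : ∑ l, (|x l + d l| - |x l|) = (|x i + d i| - |x i|) + (|x j + d j| - |x j|) :=
    Fintype.sum_eq_add i j hij fun k hk => by simp [hd k hk.1 hk.2]
  rw [Finset.sum_sub_distrib] at this
  linarith

theorem sum_abs_le_iff_forall_signs (c : ℝ) :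
    ∑ l, |x l| ≤ c ↔ ∀ y : ι → Bool, ∑ l, (if y l then x l else -x l) ≤ c := by
  refine ⟨fun h y => le_trans (Finset.sum_le_sum fun l _ => ?_) h, fun h => ?_⟩
  · split
    · exact le_abs_self _
    · exact neg_le_abs _
  · convert h fun l => decide (0 ≤ x l) using 2 with l
    by_cases hl : 0 ≤ x l
    · simp [hl, abs_of_nonneg hl]
    · simp [hl, abs_of_neg (not_le.1 hl)]

end AbsSum

theorem abs_add_mul_sign {x : ℝ} (hx : x ≠ 0) {η : ℝ} (hη : -|x| ≤ η) :
    |x + η * SignType.sign x| = |x| + η := by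
  have : x + η * SignType.sign x = SignType.sign x * (|x| + η) := by
    nth_rewrite 1 [← sign_mul_abs x]; ring
  rw [this, abs_mul, abs_of_nonneg (by linarith : 0 ≤ |x| + η)]
  rcases lt_or_gt_of_ne hx with h | h <;> simp [h]

theorem eq_of_abs_eq_of_mul_eq {a b : ℝ} (hab : |a| = |b|) (h : a * b = |a| * |b|) : a = b := by
  have ha := sq_abs a
  have hb := sq_abs b
  rw [hab] at ha h
  have : (a - b) ^ 2 = 0 := by nlinarith
  exact sub_eq_zero.1 (pow_eq_zero_iff two_ne_zero |>.1 this)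

theorem abs_ite_neg {b : ℝ} (hb : 0 ≤ b) (s : Bool) : |if s then b else -b| = b := by
  cases s <;> simp [abs_of_nonneg hb]

theorem exists_eq_ite_neg_of_abs_eq {a b : ℝ} (h : |a| = b) :
    ∃ s : Bool, a = if s then b else -b := by
  rcases eq_or_eq_neg_of_abs_eq h with h | h
  · exact ⟨true, h⟩
  · exact ⟨false, h⟩

def cropPoly (n : ℕ) (δ : ℝ) : Set (Fin n → ℝ) :=
  polySet (0 : Matrix (Fin 0) (Fin n) ℝ) 0 (cropB n) (cropd n δ)

def cropVertices (n : ℕ) (δ : ℝ) : Set (Fin n → ℝ) :=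
  {v | ∃ i j, i ≠ j ∧ |v i| = δ ∧ |v j| = 1 - δ ∧ ∀ k, k ≠ i → k ≠ j → v k = 0}

section CropPoly

variable {n : ℕ} {δ : ℝ}

theorem cropB_mulVec_inl (y : Fin n → Bool) (x : Fin n → ℝ) :
    (cropB n *ᵥ x) (Sum.inl y) = ∑ k, if y k then x k else -x k := by
  simp only [cropB, mulVec, dotProduct, of_apply, Sum.elim_inl]
  exact Finset.sum_congr rfl fun k _ => by split <;> ring

theorem cropB_inr_inl (i : Fin n) : cropB n (Sum.inr (Sum.inl i)) = Pi.single i 1 := by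
  ext j
  simp [cropB, Pi.single_apply]

theorem cropB_inr_inr (i : Fin n) : cropB n (Sum.inr (Sum.inr i)) = -Pi.single i 1 := by
  ext j
  simp only [cropB, of_apply, Sum.elim_inr, Pi.neg_apply, Pi.single_apply]
  split_ifs <;> simp

theorem cropB_mulVec_inr_inl (i : Fin n) (x : Fin n → ℝ) :
    (cropB n *ᵥ x) (Sum.inr (Sum.inl i)) = x i := by
  change cropB n _ ⬝ᵥ x = _
  rw [cropB_inr_inl, single_dotProduct, one_mul]

theorem cropB_mulVec_inr_inr (i : Fin n) (x : Fin n → ℝ) :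
    (cropB n *ᵥ x) (Sum.inr (Sum.inr i)) = -x i := by
  change cropB n _ ⬝ᵥ x = _
  rw [cropB_inr_inr, neg_dotProduct, single_dotProduct, one_mul]

theorem mem_cropPoly_iff {x : Fin n → ℝ} :
    x ∈ cropPoly n δ ↔ ∑ k, |x k| ≤ 1 ∧ ∀ k, |x k| ≤ δ := by
  simp only [cropPoly, polySet, Set.mem_ofPred_eq, zero_mulVec, true_and, Pi.le_def,
    Sum.forall, cropB_mulVec_inl, cropB_mulVec_inr_inl, cropB_mulVec_inr_inr, cropd,
    Sum.elim_inl, Sum.elim_inr, abs_le', forall_and, sum_abs_le_iff_forall_signs]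

theorem add_mem_cropPoly {v d : Fin n → ℝ} {i j : Fin n} (hv : v ∈ cropPoly n δ) (hij : i ≠ j)
    (hd : ∀ k, k ≠ i → k ≠ j → d k = 0) (hi : |v i + d i| ≤ δ) (hj : |v j + d j| ≤ δ)
    (hsum : |v i + d i| + |v j + d j| + ∑ k, |v k| ≤ 1 + (|v i| + |v j|)) :
    v + d ∈ cropPoly n δ := by
  rw [mem_cropPoly_iff] at hv ⊢
  refine ⟨?_, fun k => ?_⟩
  · simp only [Pi.add_apply]
    linarith [sum_abs_add_eq v d hij hd]
  by_cases hki : k = i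
  · exact hki ▸ hi
  by_cases hkj : k = j
  · exact hkj ▸ hj
  simpa [hd k hki hkj] using hv.2 k

theorem not_isVertex_cropPoly_of_sum_abs_lt {v : Fin n → ℝ} {i j : Fin n}
    (hv : v ∈ cropPoly n δ) (hij : i ≠ j) (hi : |v i| < δ) (hS : ∑ k, |v k| < 1) :
    ¬ IsVertex (cropPoly n δ) v := by
  intro h
  have hvj := (mem_cropPoly_iff.1 hv).2 j
  set ε := min (δ - |v i|) (1 - ∑ k, |v k|)
  have hε₁ : ε ≤ δ - |v i| := min_le_left _ _
  have hε₂ : ε ≤ 1 - ∑ k, |v k| := min_le_right _ _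
  have hε : 0 < ε := lt_min (by linarith) (by linarith)
  have hu := h.eq_zero_of_add_smul_mem (u := Pi.single i 1) hε
    fun η hη => by
      have hvi : |v i + η| ≤ |v i| + ε := (abs_add_le _ _).trans (by linarith)
      refine add_mem_cropPoly hv hij (fun k hki _ => by simp [hki]) ?_ ?_ ?_ <;>
        simp [hij.symm] <;> linarith
  simpa using congrFun hu i

theorem not_isVertex_cropPoly_of_abs_lt {v : Fin n → ℝ} {i j : Fin n}
    (hv : v ∈ cropPoly n δ) (hij : i ≠ j) (hi₀ : v i ≠ 0) (hj₀ : v j ≠ 0)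
    (hi : |v i| < δ) (hj : |v j| < δ) : ¬ IsVertex (cropPoly n δ) v := by
  intro h
  have hS := (mem_cropPoly_iff.1 hv).1
  set ε := min (min |v i| (δ - |v i|)) (min |v j| (δ - |v j|))
  have hε₁ : ε ≤ |v i| := (min_le_left _ _).trans (min_le_left _ _)
  have hε₂ : ε ≤ δ - |v i| := (min_le_left _ _).trans (min_le_right _ _)
  have hε₃ : ε ≤ |v j| := (min_le_right _ _).trans (min_le_left _ _)
  have hε₄ : ε ≤ δ - |v j| := (min_le_right _ _).trans (min_le_right _ _)
  have hε : 0 < ε := lt_min (lt_min (abs_pos.2 hi₀) (by linarith))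
    (lt_min (abs_pos.2 hj₀) (by linarith))
  have hu := h.eq_zero_of_add_smul_mem
    (u := Pi.single i (SignType.sign (v i) : ℝ) - Pi.single j (SignType.sign (v j) : ℝ)) hε
    fun η hη => by
      obtain ⟨hη₁, hη₂⟩ := abs_le.1 hη
      have hvi : |v i + η * SignType.sign (v i)| = |v i| + η :=
        abs_add_mul_sign hi₀ (by linarith)
      have hvj : |v j + η * -(SignType.sign (v j) : ℝ)| = |v j| - η := by
        rw [mul_neg, ← neg_mul, abs_add_mul_sign hj₀ (by linarith), sub_eq_add_neg]
      refine add_mem_cropPoly hv hij (fun k hki hkj => by simp [hki, hkj]) ?_ ?_ ?_ <;>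
        simp only [Pi.smul_apply, Pi.sub_apply, Pi.single_eq_same, Pi.single_eq_of_ne hij,
          Pi.single_eq_of_ne hij.symm, smul_eq_mul, sub_zero, zero_sub, hvi, hvj] <;> linarith
  have hsign : (SignType.sign (v i) : ℝ) = 0 := by simpa [hij.symm] using congrFun hu i
  exact hi₀ (by rw [← sign_mul_abs (v i), hsign, zero_mul])

end CropPoly

section CropVertices

variable {n : ℕ} {δ : ℝ} {v : Fin n → ℝ}

theorem mem_cropVertices_of_isVertex (hn : 2 ≤ n) (hδ₁ : 1 / 2 < δ) (hδ₂ : δ < 1)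
    (h : IsVertex (cropPoly n δ) v) : v ∈ cropVertices n δ := by
  have hv := h.mem
  obtain ⟨hS, hbox⟩ := mem_cropPoly_iff.1 hv
  have hpair {i j : Fin n} (hij : i ≠ j) := abs_add_abs_le_sum_abs v hij
  have hmid {i j : Fin n} (hij : i ≠ j) (hi₀ : v i ≠ 0) (hi : |v i| < δ) (hj₀ : v j ≠ 0)
      (hj : |v j| < δ) : False :=
    not_isVertex_cropPoly_of_abs_lt hv hij hi₀ hj₀ hi hj h
  have hS₁ : ∑ k, |v k| = 1 := by
    refine le_antisymm hS (not_lt.1 fun hlt => ?_)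
    have : Nontrivial (Fin n) := Fin.nontrivial_iff_two_le.2 hn
    obtain ⟨i, j, hij⟩ := exists_pair_ne (Fin n)
    rcases (hbox i).lt_or_eq with hi | hi
    · exact not_isVertex_cropPoly_of_sum_abs_lt hv hij hi hlt h
    rcases (hbox j).lt_or_eq with hj | hj
    · exact not_isVertex_cropPoly_of_sum_abs_lt hv hij.symm hj hlt h
    linarith [hpair hij]
  -- otherwise at most one coordinate is nonzero, and then `∑ k, |v k| < δ < 1`
  obtain ⟨i, hi⟩ : ∃ i, |v i| = δ := by
    by_contra! hne
    have hlt k : |v k| < δ := (hbox k).lt_of_ne (hne k)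
    obtain ⟨j, hj⟩ : ∃ j, v j ≠ 0 := by
      by_contra! h₀
      simp [h₀] at hS₁
    have := Fintype.sum_eq_single j fun k hkj =>
      abs_eq_zero.2 (not_not.1 fun hk => hmid hkj hk (hlt k) hj (hlt j))
    linarith [hlt j]
  have hlt {k : Fin n} (hki : k ≠ i) : |v k| < δ :=
    (hbox k).lt_of_ne fun hk => by linarith [hpair hki]
  obtain ⟨j, hji, hj⟩ : ∃ j, j ≠ i ∧ v j ≠ 0 := by
    by_contra! h₀
    have := Fintype.sum_eq_single i fun k hki => abs_eq_zero.2 (h₀ k hki)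
    linarith
  have hzero k (hki : k ≠ i) (hkj : k ≠ j) : v k = 0 :=
    not_not.1 fun hk => hmid hkj hk (hlt hki) hj (hlt hji)
  refine ⟨i, j, hji.symm, hi, ?_, hzero⟩
  linarith [sum_abs_eq_of_eq_zero v hji.symm hzero]

theorem mem_cropPoly_of_mem_cropVertices (hδ₁ : 1 / 2 < δ) (hv : v ∈ cropVertices n δ) :
    v ∈ cropPoly n δ := by
  obtain ⟨i, j, hij, hi, hj, hzero⟩ := hv
  refine mem_cropPoly_iff.2 ⟨by linarith [sum_abs_eq_of_eq_zero v hij hzero], fun k => ?_⟩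
  by_cases hki : k = i
  · exact (hki ▸ hi).le
  by_cases hkj : k = j
  · rw [hkj, hj]; linarith
  rw [hzero k hki hkj, abs_zero]; linarith

/-- On `cropPoly` every summand on the right is nonnegative, and they all vanish only at `x = v`. -/
theorem dotProduct_self_sub_dotProduct {i j : Fin n} (hij : i ≠ j) (hi : |v i| = δ)
    (hj : |v j| = 1 - δ) (hzero : ∀ k, k ≠ i → k ≠ j → v k = 0) (x : Fin n → ℝ) :
    v ⬝ᵥ v - v ⬝ᵥ x =
      (2 * δ - 1) * (δ - |x i|) + (1 - δ) * (1 - (|x i| + |x j|)) +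
        (|v i| * |x i| - v i * x i) + (|v j| * |x j| - v j * x j) := by
  have hdot (x : Fin n → ℝ) : v ⬝ᵥ x = v i * x i + v j * x j :=
    Fintype.sum_eq_add i j hij fun k hk => by simp [hzero k hk.1 hk.2]
  rw [hdot, hdot, ← abs_mul_abs_self (v i), ← abs_mul_abs_self (v j), hi, hj]
  ring

theorem isVertex_of_mem_cropVertices (hδ₁ : 1 / 2 < δ) (hδ₂ : δ < 1)
    (hv : v ∈ cropVertices n δ) : IsVertex (cropPoly n δ) v := by
  have hvP := mem_cropPoly_of_mem_cropVertices hδ₁ hv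
  obtain ⟨i, j, hij, hi, hj, hzero⟩ := hv
  have hgap := dotProduct_self_sub_dotProduct hij hi hj hzero
  have hterms {x} (hx : x ∈ cropPoly n δ) :
      0 ≤ (2 * δ - 1) * (δ - |x i|) ∧ 0 ≤ (1 - δ) * (1 - (|x i| + |x j|)) ∧
        0 ≤ |v i| * |x i| - v i * x i ∧ 0 ≤ |v j| * |x j| - v j * x j := by
    obtain ⟨hS, hbox⟩ := mem_cropPoly_iff.1 hx
    refine ⟨mul_nonneg ?_ ?_, mul_nonneg ?_ ?_, ?_, ?_⟩
    · linarith
    · linarith [hbox i]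
    · linarith
    · linarith [abs_add_abs_le_sum_abs x hij]
    · rw [sub_nonneg, ← abs_mul]; exact le_abs_self _
    · rw [sub_nonneg, ← abs_mul]; exact le_abs_self _
  refine Or.inr ⟨v, v ⬝ᵥ v, fun x hx => ?_, ⟨v, hvP, rfl⟩, ?_⟩
  · linarith [hgap x, hterms hx]
  ext x
  refine ⟨fun hx => ⟨hx ▸ hvP, hx ▸ rfl⟩, fun ⟨hx, hdot⟩ => ?_⟩
  obtain ⟨h₁, h₂, h₃, h₄⟩ := hterms hx
  have hxi : |x i| = δ := by
    rcases mul_eq_zero.1 (by linarith [hgap x] : (2 * δ - 1) * (δ - |x i|) = 0) with h | h <;>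
      linarith
  have hxij : |x i| + |x j| = 1 := by
    rcases mul_eq_zero.1 (by linarith [hgap x] : (1 - δ) * (1 - (|x i| + |x j|)) = 0) with
      h | h <;> linarith
  funext k
  by_cases hki : k = i
  · exact hki ▸ eq_of_abs_eq_of_mul_eq (hxi.trans hi.symm) (by linarith [hgap x])
  by_cases hkj : k = j
  · exact hkj ▸ eq_of_abs_eq_of_mul_eq (by linarith) (by linarith [hgap x])
  rw [hzero k hki hkj]
  have := abs_add_abs_add_abs_le_sum_abs x hij (Ne.symm hki) (Ne.symm hkj)
  exact abs_nonpos_iff.1 (by linarith [(mem_cropPoly_iff.1 hx).1])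

theorem isVertex_cropPoly_iff (hn : 2 ≤ n) (hδ₁ : 1 / 2 < δ) (hδ₂ : δ < 1) :
    IsVertex (cropPoly n δ) v ↔ v ∈ cropVertices n δ :=
  ⟨mem_cropVertices_of_isVertex hn hδ₁ hδ₂, isVertex_of_mem_cropVertices hδ₁ hδ₂⟩

end CropVertices

def cropVertexOf {n : ℕ} (δ : ℝ) (q : (Finset.univ : Finset (Fin n)).offDiag × Bool × Bool) :
    Fin n → ℝ :=
  Pi.single q.1.1.1 (if q.2.1 then δ else -δ) +
    Pi.single q.1.1.2 (if q.2.2 then 1 - δ else -(1 - δ))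

section Counting

variable {n : ℕ} {δ : ℝ}

theorem range_cropVertexOf (hδ₀ : 0 ≤ δ) (hδ₁ : δ ≤ 1) :
    Set.range (cropVertexOf (n := n) δ) = cropVertices n δ := by
  ext v
  constructor
  · rintro ⟨⟨⟨⟨i, j⟩, hij⟩, s, t⟩, rfl⟩
    have hij : i ≠ j := (Finset.mem_offDiag.1 hij).2.2
    refine ⟨i, j, hij, ?_, ?_, fun k hki hkj => by simp [cropVertexOf, hki, hkj]⟩
    · simpa [cropVertexOf, hij] using abs_ite_neg hδ₀ s
    · simpa [cropVertexOf, hij.symm] using abs_ite_neg (sub_nonneg.2 hδ₁) t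
  · rintro ⟨i, j, hij, hi, hj, hzero⟩
    obtain ⟨s, hs⟩ := exists_eq_ite_neg_of_abs_eq hi
    obtain ⟨t, ht⟩ := exists_eq_ite_neg_of_abs_eq hj
    refine ⟨⟨⟨(i, j), Finset.mem_offDiag.2 ⟨Finset.mem_univ _, Finset.mem_univ _, hij⟩⟩, s, t⟩, ?_⟩
    ext k
    by_cases hki : k = i
    · subst hki; simp [cropVertexOf, hij, hs]
    by_cases hkj : k = j
    · subst hkj; simp [cropVertexOf, hki, ht]
    simp [cropVertexOf, hki, hkj, hzero k hki hkj]

theorem cropVertexOf_injective (hδ₁ : 1 / 2 < δ) (hδ₂ : δ < 1) :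
    Function.Injective (cropVertexOf (n := n) δ) := by
  rintro ⟨⟨⟨i, j⟩, hij⟩, s, t⟩ ⟨⟨⟨i', j'⟩, hij'⟩, s', t'⟩ h
  replace hij : i ≠ j := (Finset.mem_offDiag.1 hij).2.2
  replace hij' : i' ≠ j' := (Finset.mem_offDiag.1 hij').2.2
  have hv k := congrFun h k
  simp only [cropVertexOf, Pi.add_apply, Pi.single_apply] at hv
  have hi : i = i' := by
    by_contra hne
    have := hv i
    simp only [if_neg hij, if_neg hne] at this
    split_ifs at this <;> cases s <;> cases t' <;> simp at this <;> linarith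
  subst hi
  have hj : j = j' := by
    by_contra hne
    have := hv j
    simp only [if_neg hij.symm, if_neg hne] at this
    cases t <;> simp at this <;> linarith
  subst hj
  have hs := hv i
  have ht := hv j
  simp only [if_neg hij, if_neg hij.symm, add_zero, zero_add] at hs ht
  cases s <;> cases s' <;> cases t <;> cases t' <;> simp at hs ht ⊢ <;> linarith

theorem ncard_cropVertices (hδ₁ : 1 / 2 < δ) (hδ₂ : δ < 1) :
    (cropVertices n δ).ncard = 4 * n * (n - 1) := by
  rw [← range_cropVertexOf (by linarith) hδ₂.le,
    Set.ncard_range_of_injective (cropVertexOf_injective hδ₁ hδ₂), Nat.card_prod, Nat.card_prod,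
    Nat.card_eq_fintype_card, Fintype.card_coe, Finset.offDiag_card, Finset.card_univ,
    Fintype.card_fin, Nat.card_eq_fintype_card, Fintype.card_bool, ← Nat.mul_sub_one]
  ring

end Counting

theorem isBasicSolution_cropB {n : ℕ} {δ : ℝ} {x : Fin n → ℝ} (hx : ∀ i, x i = δ ∨ x i = -δ) :
    IsBasicSolution (0 : Matrix (Fin 0) (Fin n) ℝ) 0 (cropB n) (cropd n δ) x := by
  refine ⟨by simp, eq_top_iff.2 ?_⟩
  rw [← (Pi.basisFun ℝ (Fin n)).span_eq, Submodule.span_le]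
  rintro _ ⟨k, rfl⟩
  rw [Pi.basisFun_apply]
  rcases hx k with hk | hk
  · refine Submodule.subset_span (Or.inr ⟨Sum.inr (Sum.inl k), ?_, cropB_inr_inl k⟩)
    simp [cropB_mulVec_inr_inl, hk, cropd]
  · have hrow : (fun i => cropB n i) (Sum.inr (Sum.inr k)) ∈
        (fun i => cropB n i) '' {i | (cropB n *ᵥ x) i = cropd n δ i} :=
      ⟨Sum.inr (Sum.inr k), by simp [cropB_mulVec_inr_inr, hk, cropd], rfl⟩
    rw [← neg_neg (Pi.single k 1), ← cropB_inr_inr]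
    exact Submodule.neg_mem _ (Submodule.subset_span (Or.inr hrow))

/-- For `n ≥ 2` and `δ ∈ (1/2, 1)`, the cropped cross-polytope
`Q'_n = Qₙ ∩ [-δ,δ]ⁿ` has exactly `4n(n-1)` vertices, and every point of `{-δ,δ}ⁿ` is a basic
solution of its defining system. -/
theorem stmt_12 (n : ℕ) (hn : 2 ≤ n) (δ : ℝ) (hδ₁ : 1 / 2 < δ) (hδ₂ : δ < 1) :
    {v | IsVertex
        (polySet (0 : Matrix (Fin 0) (Fin n) ℝ) 0 (cropB n) (cropd n δ)) v}.ncard =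
      4 * n * (n - 1) ∧
    ∀ x : Fin n → ℝ, (∀ i, x i = δ ∨ x i = -δ) →
      IsBasicSolution (0 : Matrix (Fin 0) (Fin n) ℝ) 0 (cropB n) (cropd n δ) x := by
  have hvert : {v | IsVertex (cropPoly n δ) v} = cropVertices n δ :=
    Set.ext fun _ => isVertex_cropPoly_iff hn hδ₁ hδ₂
  exact ⟨hvert ▸ ncard_cropVertices hδ₁ hδ₂, fun _ => isBasicSolution_cropB⟩
end
end
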